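/- arXiv:math/0303327 — 9 statements merged into one kernel-verified Lean document; each statement's English description precedes it below -/
import Mathlib

section
/- Let G be a group with elements x, y satisfying y⁻¹xy = x^(p^l + 1) for a prime p and integer l ≥ 1. Then for all natural numbers i, j, the commutator (x^(p^i), y^(p^j)) equals x raised to the power p^i·((p^l+1)^(p^j) − 1), and this exponent is divisible by p^(i+j+l). -/
/-- Lifting-the-exponent style step over ℤ. -/
private lemma step_int (p : ℕ) (s : ℕ) (hs : 1 ≤ s) (a : ℤ)
    (h : (p : ℤ) ^ s ∣ a - 1) : (p : ℤ) ^ (s + 1) ∣ a ^ p - 1 := by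
  set t : ℤ := a - 1 with ht
  have hgeom : (∑ k ∈ Finset.range p, a ^ k) * t = a ^ p - 1 := by
    simpa [ht] using geom_sum_mul a p
  -- each a^k - 1 divisible by t
  have hsum : t ∣ (∑ k ∈ Finset.range p, a ^ k) - p := by
    have : (∑ k ∈ Finset.range p, a ^ k) - p
        = ∑ k ∈ Finset.range p, (a ^ k - 1) := by
      rw [Finset.sum_sub_distrib]
      simp
    rw [this]
    exact Finset.dvd_sum fun k _ =>
      ⟨∑ i ∈ Finset.range k, a ^ i, by rw [ht, mul_comm]; exact (geom_sum_mul a k).symm⟩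
  obtain ⟨c, hc⟩ := hsum
  have hS : (∑ k ∈ Finset.range p, a ^ k) = p + t * c := by linarith
  have : a ^ p - 1 = p * t + t * t * c := by
    rw [← hgeom, hS]; ring
  rw [this]
  have h1 : (p : ℤ) ^ (s + 1) ∣ (p : ℤ) * t := by
    obtain ⟨d, hd⟩ := h
    refine ⟨d, ?_⟩
    rw [hd]; ring
  have h2 : (p : ℤ) ^ (s + 1) ∣ t * t * c := by
    obtain ⟨d, hd⟩ := h
    refine Dvd.dvd.mul_right ?_ c
    rw [hd]
    have : (p:ℤ)^s * d * ((p:ℤ)^s * d) = (p:ℤ)^(s+s) * (d*d) := by ring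
    rw [this]
    exact Dvd.dvd.mul_right (pow_dvd_pow _ (by omega)) _
  exact dvd_add h1 h2

private lemma key_dvd (p l j : ℕ) (hl : 1 ≤ l) :
    p ^ (l + j) ∣ (p ^ l + 1) ^ p ^ j - 1 := by
  have hpos : ∀ n : ℕ, 1 ≤ (p ^ l + 1) ^ n := fun n => Nat.one_le_pow _ _ (by omega)
  -- work in ℤ
  suffices h : (p : ℤ) ^ (l + j) ∣ ((p ^ l + 1 : ℕ) : ℤ) ^ p ^ j - 1 by
    rw [← Int.natCast_dvd_natCast, Nat.cast_sub (hpos _)]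
    push_cast
    push_cast at h
    exact h
  induction j with
  | zero => simp
  | succ j ih =>
    have : ((p ^ l + 1 : ℕ) : ℤ) ^ p ^ (j + 1)
        = (((p ^ l + 1 : ℕ) : ℤ) ^ p ^ j) ^ p := by
      rw [← pow_mul, pow_succ]
    rw [this, ← Nat.add_assoc]
    exact step_int p (l + j) (by omega) _ ih

/-- If `y⁻¹ x y = x ^ (p ^ l + 1)` in a group `G` (`p` prime, `l ≥ 1`),
then for all `i j : ℕ`, the commutator `(x^(p^i), y^(p^j)) = x^(p^i)⁻¹ (y^(p^j))⁻¹ x^(p^i) y^(p^j)`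
equals `x ^ (p^i * ((p^l+1)^(p^j) - 1))`, and `p^(i+j+l)` divides this exponent. -/
theorem commutator_power_formula {G : Type*} [Group G] (p l : ℕ) (hp : p.Prime)
    (hl : 1 ≤ l) (x y : G) (hrel : y⁻¹ * x * y = x ^ (p ^ l + 1)) (i j : ℕ) :
    (x ^ p ^ i)⁻¹ * (y ^ p ^ j)⁻¹ * x ^ p ^ i * y ^ p ^ j =
      x ^ (p ^ i * ((p ^ l + 1) ^ p ^ j - 1)) ∧
    p ^ (i + j + l) ∣ p ^ i * ((p ^ l + 1) ^ p ^ j - 1) := by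
  set m := p ^ l + 1 with hm
  have hconj : ∀ k : ℕ, (y ^ k)⁻¹ * x * y ^ k = x ^ m ^ k := by
    intro k
    induction k with
    | zero => simp
    | succ k ih =>
      have : (y ^ (k+1))⁻¹ * x * y ^ (k+1)
          = y⁻¹ * ((y ^ k)⁻¹ * x * y ^ k) * y := by
        rw [pow_succ, mul_inv_rev]; group
      rw [this, ih]
      have : y⁻¹ * x ^ m ^ k * y = (y⁻¹ * x * y) ^ m ^ k := by
        simpa using (conj_pow (i := m ^ k) (a := y⁻¹) (b := x)).symm
      rw [this, hrel, ← pow_mul, pow_succ, Nat.mul_comm]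
  have hconjn : ∀ k n : ℕ, (y ^ k)⁻¹ * x ^ n * y ^ k = x ^ (n * m ^ k) := by
    intro k n
    have : (y ^ k)⁻¹ * x ^ n * y ^ k = ((y ^ k)⁻¹ * x * y ^ k) ^ n := by
      simpa using (conj_pow (i := n) (a := (y ^ k)⁻¹) (b := x)).symm
    rw [this, hconj, ← pow_mul, Nat.mul_comm]
  have hge : 1 ≤ m ^ p ^ j := Nat.one_le_pow _ _ (by omega)
  constructor
  · have : (x ^ p ^ i)⁻¹ * (y ^ p ^ j)⁻¹ * x ^ p ^ i * y ^ p ^ j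
        = (x ^ p ^ i)⁻¹ * ((y ^ p ^ j)⁻¹ * x ^ p ^ i * y ^ p ^ j) := by group
    rw [this, hconjn]
    have hx : x ^ p ^ i * x ^ (p ^ i * (m ^ p ^ j - 1)) = x ^ (p ^ i * m ^ p ^ j) := by
      rw [← pow_add]
      congr 1
      have hle : p ^ i ≤ p ^ i * m ^ p ^ j := Nat.le_mul_of_pos_right _ (by omega)
      rw [Nat.mul_sub, Nat.mul_one]
      omega
    rw [← hx]
    group
  · have h1 : p ^ (l + j) ∣ m ^ p ^ j - 1 := key_dvd p l j hl
    have : i + j + l = i + (l + j) := by omega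
    rw [this, pow_add]
    exact mul_dvd_mul_left _ h1
end

section
/- In the group G(r,e) = ⟨f,g,h | f^p = g^(p^(r-2)) = h^p = (g,h) = 1, (f,h⁻¹) = g^(e·p^(r-3)), (f,g) = h⟩ with p an odd prime, r ≥ 4, the element g^p is central. -/
/-- In `G(r,e) = ⟨f,g,h | f^p = g^(p^(r-2)) = h^p = (g,h) = 1,
(f,h⁻¹) = g^(e·p^(r-3)), (f,g) = h⟩` with `p` an odd prime and `r ≥ 4`,
the element `g^p` is central. -/
theorem g_pow_p_central {G : Type*} [Group G] (p r : ℕ) (e : ℤ) (hp : p.Prime)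
    (hodd : Odd p) (hr : 4 ≤ r) (f g h : G)
    (hgen : Subgroup.closure {f, g, h} = ⊤)
    (hf : f ^ p = 1) (hg : g ^ p ^ (r - 2) = 1) (hh : h ^ p = 1)
    (hgh : g⁻¹ * h⁻¹ * g * h = 1)
    (hfh : f⁻¹ * (h⁻¹)⁻¹ * f * h⁻¹ = g ^ (e * (p : ℤ) ^ (r - 3)))
    (hfg : f⁻¹ * g⁻¹ * f * g = h) :
    ∀ a : G, Commute (g ^ p) a := by
  -- g commutes with h
  have cgh : Commute g h := by
    have h1 : h * g * (g⁻¹ * h⁻¹ * g * h) = h * g := by rw [hgh, mul_one]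
    have : g * h = h * g := by
      calc g * h = h * g * (g⁻¹ * h⁻¹ * g * h) := by group
        _ = h * g := h1
    exact this
  -- conjugation of g by f
  have hconj : f⁻¹ * g * f = g * h⁻¹ := by rw [← hfg]; group
  -- f commutes with g^p
  have hfp : f⁻¹ * g ^ p * f = g ^ p := by
    have h2 : f⁻¹ * g ^ p * f = (f⁻¹ * g * f) ^ p := by
      have := conj_pow (a := f⁻¹) (b := g) (i := p)
      simpa [inv_inv] using this.symm
    rw [h2, hconj, (cgh.inv_right).mul_pow, inv_pow, hh, inv_one, mul_one]
  have cfg : Commute (g ^ p) f := by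
    have : g ^ p * f = f * (g ^ p) := by
      calc g ^ p * f = f * (f⁻¹ * g ^ p * f) := by group
        _ = f * g ^ p := by rw [hfp]
    exact this
  -- g^p commutes with all generators, hence with everything
  have key : Subgroup.closure {f, g, h} ≤ Subgroup.centralizer {g ^ p} := by
    rw [Subgroup.closure_le]
    intro x hx
    simp only [Set.mem_insert_iff, Set.mem_singleton_iff] at hx
    rcases hx with rfl | rfl | rfl
    · exact Subgroup.mem_centralizer_iff.mpr (by rintro y rfl; exact cfg.eq)
    · exact Subgroup.mem_centralizer_iff.mpr (by rintro y rfl; exact ((Commute.refl x).pow_left p).eq)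
    · exact Subgroup.mem_centralizer_iff.mpr (by rintro y rfl; exact (cgh.pow_left p).eq)
  intro a
  have ha : a ∈ Subgroup.centralizer {g ^ p} :=
    key (hgen ▸ Subgroup.mem_top a)
  exact Subgroup.mem_centralizer_iff.mp ha (g ^ p) rfl
end

section
/- Let G be a group with x, y satisfying y⁻¹xy = x^(p^l+1), where all relevant powers make sense. Then for all natural numbers b and integers a, (y·x^a)^b = y^b · x^(a·((p^l+1)^b − 1)/p^l). -/
/-- If `y⁻¹ x y = x ^ (p^l + 1)` in a group `G` (`p` prime, `l ≥ 1`), then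
for all `b : ℕ` and `a : ℤ`, `(y * x^a)^b = y^b * x^(a * ((p^l+1)^b - 1)/p^l)`.
(The exponent is an exact integer division since `p^l ∣ (p^l+1)^b - 1`.) -/
theorem mul_pow_formula {G : Type*} [Group G] (p l : ℕ) (hp : p.Prime) (hl : 1 ≤ l)
    (x y : G) (hrel : y⁻¹ * x * y = x ^ (p ^ l + 1)) (b : ℕ) (a : ℤ) :
    (y * x ^ a) ^ b =
      y ^ b * x ^ (a * ((((p : ℤ) ^ l + 1) ^ b - 1) / (p : ℤ) ^ l)) := by
  set q : ℤ := (p : ℤ) ^ l with hq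
  have hq0 : q ≠ 0 := by
    have := hp.pos
    positivity
  -- commutation rule
  have hx : ∀ c : ℤ, x ^ c * y = y * x ^ (c * (q + 1)) := by
    intro c
    have h1 : y⁻¹ * x ^ c * y = (y⁻¹ * x * y) ^ c := by
      rw [show y⁻¹ * x * y = y⁻¹ * x * y⁻¹⁻¹ by rw [inv_inv], conj_zpow, inv_inv]
    have h2 : (y⁻¹ * x * y) ^ c = x ^ (c * (q + 1)) := by
      rw [hrel, ← zpow_natCast x (p ^ l + 1), ← zpow_mul]
      congr 1
      push_cast [hq]
      ring
    have := h1.trans h2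
    calc x ^ c * y = y * (y⁻¹ * x ^ c * y) := by group
    _ = y * x ^ (c * (q + 1)) := by rw [this]
  -- divisibility of (q+1)^n - 1 by q
  have hdvd : ∀ n : ℕ, q ∣ (q + 1) ^ n - 1 := by
    intro n
    have : (q + 1) ^ n ≡ 1 ^ n [ZMOD q] := (Int.ModEq.refl _).pow n |>.trans
      (by exact Int.ModEq.pow n (by simpa using Int.emod_emod_of_dvd _ (dvd_refl q) ▸
        (Int.modEq_iff_dvd.mpr ⟨-1, by ring⟩)))
    simpa using (Int.ModEq.dvd this.symm)
  induction b with
  | zero => simp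
  | succ b ih =>
      obtain ⟨e, he⟩ := hdvd b
      have hc : ((q + 1) ^ b - 1) / q = e := by
        rw [he, Int.mul_ediv_cancel_left _ hq0]
      have hc' : ((q + 1) ^ (b + 1) - 1) / q = (q + 1) * e + 1 := by
        have : (q + 1) ^ (b + 1) - 1 = q * ((q + 1) * e + 1) := by
          have : (q + 1) ^ (b + 1) = (q + 1) * (q * e + 1) := by
            rw [pow_succ, mul_comm ((q+1)^b)]
            congr 1
            linarith [he]
          rw [this]; ring
        rw [this, Int.mul_ediv_cancel_left _ hq0]
      rw [pow_succ, ih, hc, hc']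
      calc y ^ b * x ^ (a * e) * (y * x ^ a)
          = y ^ b * (x ^ (a * e) * y) * x ^ a := by group
        _ = y ^ b * (y * x ^ (a * e * (q + 1))) * x ^ a := by rw [hx]
        _ = y ^ (b + 1) * (x ^ (a * e * (q + 1)) * x ^ a) := by group
        _ = y ^ (b + 1) * x ^ (a * ((q + 1) * e + 1)) := by
            rw [← zpow_add]; ring_nf
end

section
/- Let p be an odd prime and G = P(m,n,q,l) the metacyclic p-group ⟨x, y | x^(p^m) = 1, y^(p^n) = x^(p^q), (x,y) = x^(p^l)⟩ with n = q, n + l ≥ m, and (p^l+1)^(p^n) ≡ 1 mod p^m. Set z = y·x^(p^(m−n)−1). Then z^(p^n) = 1. -/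
/-!
Conjugation by `y` raises `x` to the power `r = p ^ l + 1`, so
`(y * x ^ a) ^ k = y ^ k * x ^ (a * (1 + r + ⋯ + r ^ (k - 1)))`.
For odd `p` and `r ≡ 1 [MOD p ^ l]` the geometric sum of length `p ^ n` is
`≡ p ^ n [MOD p ^ (n + l)]`: for `n = 1` because `r ^ i ≡ 1 + i (r - 1) [MOD (r - 1) ^ 2]`
and `p ∣ 0 + 1 + ⋯ + (p - 1)`, and in general by splitting the sum of length `p ^ (n + 1)`
into a sum of length `p` times a sum in `r ^ p`.
With `k = p ^ n` and `a = p ^ (m - n) - 1` the exponent of `x` in `z ^ p ^ n` is thus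
`≡ p ^ n + a * p ^ n = p ^ m [MOD p ^ (n + l)]`, hence divisible by `p ^ m` as `m ≤ n + l`.
-/

open Finset

section Conjugation

variable {G : Type*} [Group G] {x y : G} {r : ℕ}

theorem pow_mul_eq_mul_pow_mul_of_conj (h : y⁻¹ * x * y = x ^ r) (k : ℕ) :
    x ^ k * y = y * x ^ (k * r) := by
  have hk : y⁻¹ * x ^ k * y = x ^ (k * r) := by
    simpa [mul_comm k, pow_mul, ← h] using (conj_pow (a := y⁻¹) (b := x) (i := k)).symm
  rw [← hk]
  group

theorem mul_pow_pow_eq_pow_mul_pow_geom_sum (h : y⁻¹ * x * y = x ^ r) (a k : ℕ) :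
    (y * x ^ a) ^ k = y ^ k * x ^ (a * ∑ i ∈ range k, r ^ i) := by
  induction k with
  | zero => simp
  | succ k ih =>
    calc (y * x ^ a) ^ (k + 1) = y ^ k * (x ^ (a * ∑ i ∈ range k, r ^ i) * y) * x ^ a := by
          rw [pow_succ, ih]; group
      _ = y ^ (k + 1) * x ^ (a * ∑ i ∈ range (k + 1), r ^ i) := by
          rw [pow_mul_eq_mul_pow_mul_of_conj h, geom_sum_succ, pow_succ y, mul_add, mul_one,
            pow_add x, mul_left_comm, mul_comm r, ← mul_assoc]
          group

end Conjugation

theorem geom_sum_mul_geom_sum_pow {R : Type*} [Semiring R] (r : R) (a b : ℕ) :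
    (∑ i ∈ range a, r ^ i) * ∑ j ∈ range b, (r ^ a) ^ j = ∑ i ∈ range (a * b), r ^ i := by
  induction b with
  | zero => simp
  | succ b ih =>
    rw [sum_range_succ, mul_add, ih, Nat.mul_succ, sum_range_add, ← pow_mul, sum_mul]
    refine congrArg _ (sum_congr rfl fun i _ => ?_)
    rw [← pow_add, add_comm]

theorem Odd.dvd_sum_range_id {p : ℕ} (hp : Odd p) : p ∣ ∑ i ∈ range p, i := by
  obtain ⟨k, rfl⟩ := hp
  refine ⟨k, ?_⟩
  have h := sum_range_id_mul_two (2 * k + 1)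
  rw [Nat.add_sub_cancel] at h
  linarith

theorem geom_sum_modEq_of_odd {p l : ℕ} {r : ℤ} (hp : Odd p) (hl : 1 ≤ l)
    (hr : r ≡ 1 [ZMOD p ^ l]) : ∑ i ∈ range p, r ^ i ≡ p [ZMOD p ^ (l + 1)] := by
  rw [Int.modEq_comm, Int.modEq_iff_dvd] at hr ⊢
  have hterm (i : ℕ) : (r - 1) ^ 2 ∣ r ^ i - 1 - i * (r - 1) := by
    simpa [sub_sub, add_comm, mul_comm] using sq_dvd_add_pow_sub_sub (r - 1) 1 i
  have hsplit : ∑ i ∈ range p, r ^ i - p =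
      ∑ i ∈ range p, (r ^ i - 1 - i * (r - 1)) + (r - 1) * ∑ i ∈ range p, (i : ℤ) := by
    simp only [sum_sub_distrib, ← sum_mul, sum_const, card_range, nsmul_one]
    ring
  rw [hsplit]
  refine dvd_add (dvd_sum fun i _ => ?_) ?_
  · calc (p : ℤ) ^ (l + 1) ∣ (p ^ l) ^ 2 := by rw [← pow_mul]; exact pow_dvd_pow _ (by omega)
      _ ∣ (r - 1) ^ 2 := pow_dvd_pow_of_dvd hr 2
      _ ∣ _ := hterm i
  · rw [pow_succ]
    exact mul_dvd_mul hr (by simpa using Int.natCast_dvd_natCast.mpr hp.dvd_sum_range_id)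

theorem geom_sum_pow_modEq_of_odd {p l : ℕ} {r : ℤ} (hp : Odd p) (hl : 1 ≤ l)
    (hr : r ≡ 1 [ZMOD p ^ l]) (n : ℕ) :
    ∑ i ∈ range (p ^ n), r ^ i ≡ p ^ n [ZMOD p ^ (n + l)] := by
  induction n generalizing l r with
  | zero => simp
  | succ n ih =>
    have hbase := geom_sum_modEq_of_odd hp hl hr
    have hrp : r ^ p ≡ 1 [ZMOD p ^ (l + 1)] := by
      have hdvd : (p : ℤ) ∣ ∑ i ∈ range p, r ^ i :=
        Int.modEq_zero_iff_dvd.mp ((hbase.of_dvd (dvd_pow_self _ (by omega))).trans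
          (Int.modEq_zero_iff_dvd.mpr dvd_rfl))
      rw [Int.modEq_comm, Int.modEq_iff_dvd] at hr ⊢
      rw [← geom_sum_mul, pow_succ']
      exact mul_dvd_mul hdvd hr
    have htail := ih (by omega) hrp
    have htail_dvd : (p : ℤ) ^ n ∣ ∑ j ∈ range (p ^ n), (r ^ p) ^ j :=
      Int.modEq_zero_iff_dvd.mp ((htail.of_dvd (pow_dvd_pow _ (by omega))).trans
        (Int.modEq_zero_iff_dvd.mpr dvd_rfl))
    rw [pow_succ' p n, ← geom_sum_mul_geom_sum_pow]
    rw [Int.modEq_comm, Int.modEq_iff_dvd] at hbase htail ⊢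
    have hsplit :
        (∑ i ∈ range p, r ^ i) * ∑ j ∈ range (p ^ n), (r ^ p) ^ j - (p : ℤ) ^ (n + 1) =
          (∑ i ∈ range p, r ^ i - p) * ∑ j ∈ range (p ^ n), (r ^ p) ^ j +
            p * (∑ j ∈ range (p ^ n), (r ^ p) ^ j - p ^ n) := by ring
    rw [hsplit]
    refine dvd_add ?_ ?_
    · rw [show n + 1 + l = (l + 1) + n by omega, pow_add]
      exact mul_dvd_mul hbase htail_dvd
    · exact dvd_mul_of_dvd_right (by rwa [show n + 1 + l = n + (l + 1) by omega]) _

theorem pow_dvd_pow_add_mul_geom_sum {p l m n : ℕ} (hp : Odd p) (hl : 1 ≤ l) (hnm : n ≤ m)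
    (hmnl : m ≤ n + l) :
    p ^ m ∣ p ^ n + (p ^ (m - n) - 1) * ∑ i ∈ range (p ^ n), (p ^ l + 1) ^ i := by
  have hS : ∑ i ∈ range (p ^ n), ((p : ℤ) ^ l + 1) ^ i ≡ p ^ n [ZMOD p ^ m] :=
    (geom_sum_pow_modEq_of_odd hp hl Int.add_modEq_left n).of_dvd (pow_dvd_pow _ hmnl)
  rw [← Int.natCast_dvd_natCast, ← Int.modEq_zero_iff_dvd]
  push_cast [Nat.cast_sub (Nat.one_le_pow _ _ hp.pos)]
  calc (p : ℤ) ^ n + ((p : ℤ) ^ (m - n) - 1) * ∑ i ∈ range (p ^ n), ((p : ℤ) ^ l + 1) ^ i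
      ≡ p ^ n + (p ^ (m - n) - 1) * p ^ n [ZMOD p ^ m] := (hS.mul_left _).add_left _
    _ = p ^ m := by rw [← pow_sub_mul_pow (p : ℤ) hnm]; ring
    _ ≡ 0 [ZMOD p ^ m] := Int.modEq_zero_iff_dvd.mpr dvd_rfl

theorem metacyclic_z_pow_eq_one_general {G : Type*} [Group G] (p m n q l : ℕ)
    (hodd : Odd p) (hl : 1 ≤ l)
    (hqn : q = n) (hnl : m ≤ n + l) (hqm : q ≤ m)
    (x y : G) (hx : x ^ p ^ m = 1) (hy : y ^ p ^ n = x ^ p ^ q)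
    (hrel : x⁻¹ * y⁻¹ * x * y = x ^ p ^ l) :
    (y * x ^ (p ^ (m - n) - 1)) ^ p ^ n = 1 := by
  subst hqn
  have hconj : y⁻¹ * x * y = x ^ (p ^ l + 1) := by
    rw [pow_succ', ← hrel]
    group
  obtain ⟨c, hc⟩ := pow_dvd_pow_add_mul_geom_sum hodd hl hqm hnl
  rw [mul_pow_pow_eq_pow_mul_pow_geom_sum hconj, hy, ← pow_add, hc, pow_mul, hx, one_pow]

/-- In the metacyclic p-group `P(m,n,q,l)` (p odd) with `n = q`, `n + l ≥ m`,
the element `z = y * x^(p^(m-n) - 1)` satisfies `z^(p^n) = 1`. -/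
theorem metacyclic_z_pow_eq_one {G : Type*} [Group G] (p m n q l : ℕ) (hp : p.Prime)
    (hodd : Odd p) (hm : 1 ≤ m) (hn : 1 ≤ n) (hq : 1 ≤ q) (hl : 1 ≤ l)
    (hqn : q = n) (hnl : m ≤ n + l) (hql : m ≤ q + l) (hlm : l ≤ m) (hqm : q ≤ m)
    (hcong1 : (p ^ l + 1) ^ p ^ n ≡ 1 [MOD p ^ m])
    (hcong2 : (p ^ l + 1) * p ^ q ≡ p ^ q [MOD p ^ m])
    (x y : G) (hx : x ^ p ^ m = 1) (hy : y ^ p ^ n = x ^ p ^ q)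
    (hrel : x⁻¹ * y⁻¹ * x * y = x ^ p ^ l) :
    (y * x ^ (p ^ (m - n) - 1)) ^ p ^ n = 1 :=
  metacyclic_z_pow_eq_one_general p m n q l hodd hl hqn hnl hqm x y hx hy hrel
end

section
/- Let p be an odd prime, m, n, q, l as in the metacyclic presentation, and z = y·x^(p^(m−n)−1) with n = q. Then (x, z) = x^(p^l), i.e. z satisfies the same commutation relation with x as y does. -/
/-- In the metacyclic p-group `P(m,n,q,l)` (p odd) with `n = q`, the element
`z = y * x^(p^(m-n) - 1)` satisfies the same commutation relation with `x` as `y` does: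
`(x, z) = x⁻¹ z⁻¹ x z = x^(p^l)`. -/
theorem metacyclic_commutator_z {G : Type*} [Group G] (p m n q l : ℕ) (hp : p.Prime)
    (hodd : Odd p) (hm : 1 ≤ m) (hn : 1 ≤ n) (hq : 1 ≤ q) (hl : 1 ≤ l)
    (hqn : q = n) (hnl : m ≤ n + l) (hql : m ≤ q + l) (hlm : l ≤ m) (hqm : q ≤ m)
    (hcong1 : (p ^ l + 1) ^ p ^ n ≡ 1 [MOD p ^ m])
    (hcong2 : (p ^ l + 1) * p ^ q ≡ p ^ q [MOD p ^ m])
    (x y : G) (hx : x ^ p ^ m = 1) (hy : y ^ p ^ n = x ^ p ^ q)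
    (hrel : x⁻¹ * y⁻¹ * x * y = x ^ p ^ l) :
    x⁻¹ * (y * x ^ (p ^ (m - n) - 1))⁻¹ * x * (y * x ^ (p ^ (m - n) - 1)) = x ^ p ^ l := by
  set k := p ^ (m - n) - 1 with hk
  have h1 : y⁻¹ * x * y = x ^ (p ^ l + 1) := by
    calc y⁻¹ * x * y = x * (x⁻¹ * y⁻¹ * x * y) := by group
    _ = x * x ^ p ^ l := by rw [hrel]
    _ = x ^ (p ^ l + 1) := by rw [pow_succ']
  calc x⁻¹ * (y * x ^ k)⁻¹ * x * (y * x ^ k)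
      = x⁻¹ * (x ^ k)⁻¹ * (y⁻¹ * x * y) * x ^ k := by group
    _ = x⁻¹ * (x ^ k)⁻¹ * x ^ (p ^ l + 1) * x ^ k := by rw [h1]
    _ = x⁻¹ * ((x ^ k)⁻¹ * x ^ (p ^ l + 1) * x ^ k) := by group
    _ = x⁻¹ * x ^ (p ^ l + 1) := by
        have hc : Commute (x ^ k) (x ^ (p ^ l + 1)) := Commute.pow_pow_self x k _
        rw [mul_assoc, ← hc.eq, inv_mul_cancel_left]
    _ = x ^ p ^ l := by rw [pow_succ', inv_mul_cancel_left]
end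

section
/- In the cobar complex of A = 𝔽_p[x]/(x^(p^n)), the element e = Σ_{i=1}^{p^n−1} [y_i | y_{p^n−i}] is a cocycle that is not a coboundary. -/
/-! STATEMENT 6: in the cobar complex of `A = 𝔽_p[x]/(x^(p^n))`, the element
`e = Σ_{i=1}^{p^n−1} [y_i | y_{p^n−i}]` is a cocycle which is not a coboundary.

We model the dual `I(A)*` of the augmentation ideal concretely: a linear functional on
`I(A)` is a function `ℕ → 𝔽_p` recording its values on the basis `{x^i : 0 < i < p^n}`;
elements of `C² = I* ⊗ I*` (resp. `C³`) are functions on pairs (resp. triples) of basis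
indices.  The differentials are the (sign-corrected) duals of multiplication applied in
each slot, as in the cobar complex. -/

/-- the dual basis element `y k`, dual to `x^k`. -/
def cobarY (p k : ℕ) : ℕ → ZMod p := fun i => if i = k then 1 else 0

/-- the elementary tensor `[f | g] ∈ C²(A)`. -/
def cobarTensor (p : ℕ) (f g : ℕ → ZMod p) : ℕ × ℕ → ZMod p := fun q => f q.1 * g q.2

/-- the cobar differential `δ₁ : C¹(A) → C²(A)`. -/
def cobarD1 (p n : ℕ) (f : ℕ → ZMod p) : ℕ × ℕ → ZMod p := fun q =>
  if 0 < q.1 ∧ 0 < q.2 ∧ q.1 + q.2 < p ^ n then f (q.1 + q.2) else 0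

/-- the cobar differential `δ₂ : C²(A) → C³(A)`,
`δ[α|β] = [δα|β] - [α|δβ]` written on dual-basis coordinates. -/
def cobarD2 (p n : ℕ) (g : ℕ × ℕ → ZMod p) : ℕ × ℕ × ℕ → ZMod p := fun q =>
  (if 0 < q.1 ∧ 0 < q.2.1 ∧ 0 < q.2.2 ∧ q.1 + q.2.1 < p ^ n
    then g (q.1 + q.2.1, q.2.2) else 0) -
  (if 0 < q.1 ∧ 0 < q.2.1 ∧ 0 < q.2.2 ∧ q.2.1 + q.2.2 < p ^ n
    then g (q.1, q.2.1 + q.2.2) else 0)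


lemma esum_eval (p n a b : ℕ) :
    (∑ i ∈ Finset.Ioo 0 (p ^ n),
        cobarTensor p (cobarY p i) (cobarY p (p ^ n - i))) (a, b) =
    if a ∈ Finset.Ioo 0 (p ^ n) then (if b = p ^ n - a then (1 : ZMod p) else 0) else 0 := by
  simp only [Finset.sum_apply, cobarTensor, cobarY, ite_mul, one_mul, zero_mul,
    Finset.sum_ite_eq]

/-- `e = Σ_{i=1}^{p^n−1} [y_i | y_{p^n−i}]` is a nonbounding cocycle. -/
theorem cobar_e_cocycle_not_coboundary (p n : ℕ) (hp : p.Prime) (hn : 1 ≤ n) :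
    cobarD2 p n (∑ i ∈ Finset.Ioo 0 (p ^ n),
        cobarTensor p (cobarY p i) (cobarY p (p ^ n - i))) = 0 ∧
    ¬ ∃ f : ℕ → ZMod p, cobarD1 p n f =
        ∑ i ∈ Finset.Ioo 0 (p ^ n), cobarTensor p (cobarY p i) (cobarY p (p ^ n - i)) := by
  have hpn : 2 ≤ p ^ n := Nat.one_lt_pow (by omega) hp.two_le
  constructor
  · funext q
    obtain ⟨a, b, c⟩ := q
    show cobarD2 p n _ (a, b, c) = 0
    simp only [cobarD2, esum_eval, Finset.mem_Ioo, Pi.zero_apply]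
    split_ifs <;> first | (exfalso; omega) | simp
  · rintro ⟨f, hf⟩
    have h := congrFun hf (1, p ^ n - 1)
    rw [esum_eval] at h
    simp only [cobarD1, Finset.mem_Ioo] at h
    haveI := Fact.mk hp
    rw [if_neg (by omega), if_pos (by omega)] at h
    simp at h
end

section
/- Let G be a finite abelian p-group, G ≅ ℤ/(p^(n₁)) × … × ℤ/(p^(n_k)). Then the associated graded algebra of 𝔽_pG with respect to the augmentation ideal filtration is isomorphic as an algebra to 𝔽_p[x₁,…,x_k]/(x₁^(p^(n₁)),…,x_k^(p^(n_k))). -/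
/-! STATEMENT 9: for a finite abelian p-group `G ≅ ℤ/(p^(n₁)) × … × ℤ/(p^(n_k))`, the
associated graded algebra of the group algebra `𝔽_pG` with respect to the augmentation
ideal filtration is isomorphic as an `𝔽_p`-algebra to
`𝔽_p[x₁,…,x_k]/(x₁^(p^(n₁)),…,x_k^(p^(n_k)))`.

The associated graded algebra `⊕_d I^d/I^(d+1)` is encoded by its graded pieces
`I^d/I^(d+1)` together with the multiplication induced by that of `𝔽_pG` on
representatives; an algebra isomorphism is a family of `𝔽_p`-linear bijections from
the graded pieces of the (monomial-graded) truncated polynomial algebra which is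
unital and compatible with multiplication of representatives. -/

open scoped DirectSum

/-- the augmentation ideal of `𝔽_pG`. -/
noncomputable def augIdeal (p : ℕ) (G : Type*) [CommGroup G] :
    Ideal (MonoidAlgebra (ZMod p) G) :=
  RingHom.ker (MonoidAlgebra.lift (ZMod p) (ZMod p) G 1)

/-- the `d`-th power `I^d` of the augmentation ideal, as an `𝔽_p`-submodule. -/
noncomputable def augPow (p : ℕ) (G : Type*) [CommGroup G] (d : ℕ) :
    Submodule (ZMod p) (MonoidAlgebra (ZMod p) G) :=
  Submodule.restrictScalars (ZMod p) (augIdeal p G ^ d)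

/-- the graded piece `I^d/I^(d+1)` of the associated graded algebra `E⁰(𝔽_pG)`. -/
abbrev grPiece (p : ℕ) (G : Type*) [CommGroup G] (d : ℕ) :=
  augPow p G d ⧸ (Submodule.comap (augPow p G d).subtype (augPow p G (d + 1)))

/-- the class in `I^d/I^(d+1)` of an element `u ∈ I^d`. -/
noncomputable def grMk (p : ℕ) (G : Type*) [CommGroup G] (d : ℕ)
    (u : MonoidAlgebra (ZMod p) G) (hu : u ∈ augPow p G d) : grPiece p G d :=
  Submodule.Quotient.mk ⟨u, hu⟩

/-- the truncated polynomial algebra `𝔽_p[x₁,…,x_k]/(x_i^(p^(n_i)))`. -/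
abbrev TruncMvPoly (p k : ℕ) (n : Fin k → ℕ) :=
  MvPolynomial (Fin k) (ZMod p) ⧸
    Ideal.span {q : MvPolynomial (Fin k) (ZMod p) | ∃ i, q = MvPolynomial.X i ^ p ^ n i}

/-- the degree-`d` component of the truncated polynomial algebra, spanned by the
monomials of total degree `d`. -/
noncomputable def truncPiece (p k : ℕ) (n : Fin k → ℕ) (d : ℕ) :
    Submodule (ZMod p) (TruncMvPoly p k n) :=
  Submodule.span (ZMod p) {q : TruncMvPoly p k n | ∃ a : Fin k → ℕ, (∑ i, a i) = d ∧
    q = ∏ i, (Ideal.Quotient.mk _ (MvPolynomial.X i)) ^ a i}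

/-! Let `g_i` generate the `i`-th cyclic factor of `G`. In characteristic `p`,
`(g_i - 1) ^ p ^ n_i = g_i ^ p ^ n_i - 1 = 0`, so `x_i ↦ g_i - 1` defines an algebra map
`𝔽_p[x]/(x_i ^ p ^ n_i) → 𝔽_pG`; its inverse sends `∏ g_i ^ a_i` to `∏ (1 + x_i) ^ a_i`.
The isomorphism matches the augmentations, so it carries the image `m` of the ideal of the
variables onto the augmentation ideal `I`, hence `m ^ d` onto `I ^ d`. The relations are
monomials, so the truncated algebra is graded by total degree and `m ^ d` consists of the elements
without components of degree `< d`. Hence the degree-`d` component is a complement of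
`m ^ (d + 1)` in `m ^ d`, and it maps isomorphically onto `I ^ d / I ^ (d + 1)`. -/

open MvPolynomial

namespace MvPolynomial

variable {σ R : Type*}

section CommSemiring

variable [CommSemiring R]

theorem mem_idealOfVars_iff_constantCoeff_eq_zero {φ : MvPolynomial σ R} :
    φ ∈ idealOfVars σ R ↔ constantCoeff φ = 0 := by
  rw [← pow_one (idealOfVars σ R), mem_pow_idealOfVars_iff']
  simp [Finsupp.degree_eq_zero_iff, constantCoeff_eq]

theorem IsHomogeneous.mem_pow_idealOfVars {φ : MvPolynomial σ R} {d : ℕ}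
    (hφ : φ.IsHomogeneous d) : φ ∈ idealOfVars σ R ^ d :=
  (mem_pow_idealOfVars_iff d φ).mpr fun x hx => by
    by_contra! h
    exact mem_support_iff.mp hx (hφ.coeff_eq_zero h.ne)

theorem homogeneousComponent_eq_zero_of_mem_pow_idealOfVars {φ : MvPolynomial σ R} {d e : ℕ}
    (hφ : φ ∈ idealOfVars σ R ^ e) (hde : d < e) : homogeneousComponent d φ = 0 := by
  ext x
  rw [coeff_homogeneousComponent, coeff_zero]
  split_ifs with hx
  · exact (mem_pow_idealOfVars_iff' e φ).mp hφ x (hx ▸ hde)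
  · rfl

end CommSemiring

variable [CommRing R]

theorem sub_homogeneousComponent_mem_pow_idealOfVars {φ : MvPolynomial σ R} {d : ℕ}
    (hφ : φ ∈ idealOfVars σ R ^ d) :
    φ - homogeneousComponent d φ ∈ idealOfVars σ R ^ (d + 1) := by
  refine (mem_pow_idealOfVars_iff' _ _).mpr fun x hx => ?_
  rw [coeff_sub, coeff_homogeneousComponent]
  split_ifs with hxd
  · exact sub_self _
  · rw [sub_zero]
    exact (mem_pow_idealOfVars_iff' d φ).mp hφ x (by omega)

attribute [local instance] MvPolynomial.gradedAlgebra

variable (J : Ideal (MvPolynomial σ R)) (d : ℕ)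

theorem map_homogeneousSubmodule_le_pow_map_idealOfVars :
    (homogeneousSubmodule σ R d).map (Ideal.Quotient.mkₐ R J).toLinearMap ≤
      ((idealOfVars σ R).map (Ideal.Quotient.mk J) ^ d).restrictScalars R := by
  rintro _ ⟨φ, hφ, rfl⟩
  rw [Submodule.restrictScalars_mem, ← Ideal.map_pow]
  exact Ideal.mem_map_of_mem _ (IsHomogeneous.mem_pow_idealOfVars hφ)

theorem pow_map_idealOfVars_le_map_homogeneousSubmodule_sup :
    ((idealOfVars σ R).map (Ideal.Quotient.mk J) ^ d).restrictScalars R ≤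
      (homogeneousSubmodule σ R d).map (Ideal.Quotient.mkₐ R J).toLinearMap ⊔
        ((idealOfVars σ R).map (Ideal.Quotient.mk J) ^ (d + 1)).restrictScalars R := by
  intro x hx
  rw [Submodule.restrictScalars_mem, ← Ideal.map_pow,
    Ideal.mem_map_iff_of_surjective _ Ideal.Quotient.mk_surjective] at hx
  obtain ⟨φ, hφ, rfl⟩ := hx
  rw [← add_sub_cancel (homogeneousComponent d φ) φ, map_add]
  refine Submodule.add_mem_sup ⟨_, homogeneousComponent_mem d φ, rfl⟩ ?_
  rw [Submodule.restrictScalars_mem, ← Ideal.map_pow]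
  exact Ideal.mem_map_of_mem _ (sub_homogeneousComponent_mem_pow_idealOfVars hφ)

variable {J} in
theorem disjoint_map_homogeneousSubmodule_pow_succ_map_idealOfVars
    (hJ : J.IsHomogeneous (homogeneousSubmodule σ R)) :
    Disjoint ((homogeneousSubmodule σ R d).map (Ideal.Quotient.mkₐ R J).toLinearMap)
      (((idealOfVars σ R).map (Ideal.Quotient.mk J) ^ (d + 1)).restrictScalars R) := by
  refine Submodule.disjoint_def.mpr ?_
  rintro _ ⟨φ, hφ, rfl⟩ hx
  rw [Submodule.restrictScalars_mem, ← Ideal.map_pow,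
    Ideal.mem_map_iff_of_surjective _ Ideal.Quotient.mk_surjective] at hx
  obtain ⟨ψ, hψ, hψφ⟩ := hx
  have hJ' := homogeneousComponent_mem_of_mem hJ (Ideal.Quotient.eq.mp hψφ) d
  rw [map_sub, homogeneousComponent_eq_zero_of_mem_pow_idealOfVars hψ d.lt_succ_self,
    homogeneousComponent_of_mem hφ, if_pos rfl, zero_sub, neg_mem_iff] at hJ'
  exact Ideal.Quotient.eq_zero_iff_mem.mpr hJ'

end MvPolynomial

namespace Submodule

variable {R M N : Type*} [Ring R] [AddCommGroup M] [Module R M] [AddCommGroup N] [Module R N]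

theorem bijective_mkQ_comp_restrict {f : M →ₗ[R] N} (hf : Function.Surjective f)
    {P : Submodule R M} {A B : Submodule R N} (hPA : P ≤ A.comap f)
    (hdisj : Disjoint P (B.comap f)) (hsup : A.comap f ≤ P ⊔ B.comap f) :
    Function.Bijective ((B.comap A.subtype).mkQ ∘ₗ f.restrict hPA) := by
  constructor
  · refine LinearMap.ker_eq_bot.mp (LinearMap.ker_eq_bot'.mpr fun x hx => ?_)
    rw [LinearMap.comp_apply, mkQ_apply, Quotient.mk_eq_zero] at hx
    exact Subtype.ext (disjoint_def.mp hdisj x x.2 hx)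
  · intro c
    obtain ⟨⟨a, ha⟩, rfl⟩ := mkQ_surjective _ c
    obtain ⟨w, rfl⟩ := hf a
    obtain ⟨y, hy, z, hz, rfl⟩ := mem_sup.mp (hsup ha)
    refine ⟨⟨y, hy⟩, (Quotient.eq _).mpr ?_⟩
    simpa [mem_comap] using neg_mem hz

end Submodule

theorem Ideal.mul_sub_mul_mem_pow_add_succ {R : Type*} [CommRing R] {I : Ideal R} {d e : ℕ}
    {a b u v : R} (ha : a ∈ I ^ d) (hv : v ∈ I ^ e) (hau : a - u ∈ I ^ (d + 1))
    (hbv : b - v ∈ I ^ (e + 1)) : a * b - u * v ∈ I ^ (d + e + 1) := by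
  rw [show a * b - u * v = a * (b - v) + (a - u) * v by ring]
  refine add_mem ?_ ?_
  · simpa only [← pow_add, add_assoc] using Ideal.mul_mem_mul ha hbv
  · simpa only [← pow_add, add_right_comm] using Ideal.mul_mem_mul hau hv

section GroupAlgebra

variable {p k : ℕ} {n : Fin k → ℕ} {G : Type*} [CommGroup G]
  (eG : G ≃* ((i : Fin k) → Multiplicative (ZMod (p ^ n i))))

noncomputable def stdGen (i : Fin k) : G :=
  eG.symm (Pi.mulSingle i (Multiplicative.ofAdd 1))

theorem stdGen_pow_eq_one (i : Fin k) : stdGen eG i ^ p ^ n i = 1 := by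
  rw [stdGen, ← map_pow, ← Pi.mulSingle_pow, ← ofAdd_nsmul, nsmul_eq_mul, mul_one,
    ZMod.natCast_self, ofAdd_zero, Pi.mulSingle_one, map_one]

theorem prod_stdGen_pow [NeZero p] (g : G) :
    ∏ i, stdGen eG i ^ (Multiplicative.toAdd (eG g i)).val = g := by
  apply eG.injective
  have hsingle (i : Fin k) : eG (stdGen eG i ^ (Multiplicative.toAdd (eG g i)).val) =
      Pi.mulSingle i (eG g i) := by
    rw [stdGen, map_pow, MulEquiv.apply_symm_apply, ← Pi.mulSingle_pow, ← ofAdd_nsmul,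
      nsmul_eq_mul, mul_one, ZMod.natCast_zmod_val, ofAdd_toAdd]
  rw [map_prod, Finset.prod_congr rfl fun i _ => hsingle i, Finset.univ_prod_mulSingle]

noncomputable def mvPolyToGroupAlgebra :
    MvPolynomial (Fin k) (ZMod p) →ₐ[ZMod p] MonoidAlgebra (ZMod p) G :=
  aeval fun i => MonoidAlgebra.of (ZMod p) G (stdGen eG i) - 1

theorem mvPolyToGroupAlgebra_X (i : Fin k) :
    mvPolyToGroupAlgebra eG (X i) = MonoidAlgebra.of (ZMod p) G (stdGen eG i) - 1 :=
  aeval_X _ i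

theorem augmentation_mvPolyToGroupAlgebra (φ : MvPolynomial (Fin k) (ZMod p)) :
    MonoidAlgebra.lift (ZMod p) (ZMod p) G 1 (mvPolyToGroupAlgebra eG φ) = constantCoeff φ := by
  change ((MonoidAlgebra.lift (ZMod p) (ZMod p) G 1).toRingHom.comp
    (mvPolyToGroupAlgebra eG).toRingHom) φ = _
  congr 1
  refine MvPolynomial.ringHom_ext (fun r => ?_) fun i => ?_
  · simp [mvPolyToGroupAlgebra]
  · simp [mvPolyToGroupAlgebra_X]

end GroupAlgebra

section TruncMvPoly

variable {p k : ℕ} {n : Fin k → ℕ}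

noncomputable abbrev truncIdeal (p k : ℕ) (n : Fin k → ℕ) :
    Ideal (MvPolynomial (Fin k) (ZMod p)) :=
  Ideal.span {q | ∃ i, q = X i ^ p ^ n i}

variable (p n) in
theorem mk_X_pow_eq_zero (i : Fin k) :
    Ideal.Quotient.mk (truncIdeal p k n) (X i ^ p ^ n i) = 0 :=
  Ideal.Quotient.eq_zero_iff_mem.mpr (Ideal.subset_span ⟨i, rfl⟩)

variable (p n) in
theorem one_add_X_pow_eq_one [Fact p.Prime] (i : Fin k) :
    (1 + Ideal.Quotient.mk (truncIdeal p k n) (X i)) ^ p ^ n i = 1 := by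
  rw [← map_one (Ideal.Quotient.mk _), ← map_add, ← map_pow, add_pow_char_pow, one_pow,
    map_add, map_one, mk_X_pow_eq_zero, add_zero]

attribute [local instance] MvPolynomial.gradedAlgebra

theorem isHomogeneous_truncIdeal :
    (truncIdeal p k n).IsHomogeneous (homogeneousSubmodule (Fin k) (ZMod p)) :=
  Ideal.homogeneous_span _ _ fun _ ⟨i, hi⟩ => ⟨_, hi ▸ isHomogeneous_X_pow i (p ^ n i)⟩

theorem truncPiece_eq_map_homogeneousSubmodule (d : ℕ) :
    truncPiece p k n d = (homogeneousSubmodule (Fin k) (ZMod p) d).map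
      (Ideal.Quotient.mkₐ (ZMod p) (truncIdeal p k n)).toLinearMap := by
  rw [homogeneousSubmodule_eq_finsupp_supported, AddMonoidAlgebra.supported_eq_span_single,
    Submodule.map_span, truncPiece]
  congr 1
  ext q
  simp only [single_eq_monomial, Set.mem_ofPred_eq, Set.mem_image]
  constructor
  · rintro ⟨a, rfl, rfl⟩
    refine ⟨_, ⟨Finsupp.equivFunOnFinite.symm a, Finsupp.degree_eq_sum _, rfl⟩, ?_⟩
    simp [monomial_eq, Finsupp.prod_fintype]
  · rintro ⟨_, ⟨v, rfl, rfl⟩, rfl⟩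
    refine ⟨v, (Finsupp.degree_eq_sum v).symm, ?_⟩
    simp [monomial_eq, Finsupp.prod_fintype]

end TruncMvPoly

section TruncEquiv

variable {p k : ℕ} {n : Fin k → ℕ} {G : Type*} [CommGroup G]
  (eG : G ≃* ((i : Fin k) → Multiplicative (ZMod (p ^ n i)))) [Fact p.Prime]

theorem truncIdeal_le_ker_mvPolyToGroupAlgebra :
    truncIdeal p k n ≤ RingHom.ker (mvPolyToGroupAlgebra eG) := by
  have : CharP (MonoidAlgebra (ZMod p) G) p := charP_of_injective_algebraMap' (ZMod p) p
  refine Ideal.span_le.mpr ?_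
  rintro _ ⟨i, rfl⟩
  rw [SetLike.mem_coe, RingHom.mem_ker, map_pow, mvPolyToGroupAlgebra_X, sub_pow_char_pow,
    one_pow, ← map_pow, stdGen_pow_eq_one, map_one, sub_self]

noncomputable def truncToGroupAlgebra : TruncMvPoly p k n →ₐ[ZMod p] MonoidAlgebra (ZMod p) G :=
  Ideal.Quotient.liftₐ _ (mvPolyToGroupAlgebra eG) fun _ h =>
    truncIdeal_le_ker_mvPolyToGroupAlgebra eG h

theorem truncToGroupAlgebra_mk (φ : MvPolynomial (Fin k) (ZMod p)) :
    truncToGroupAlgebra eG (Ideal.Quotient.mk _ φ) = mvPolyToGroupAlgebra eG φ :=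
  rfl

theorem truncToGroupAlgebra_one_add_X (i : Fin k) :
    truncToGroupAlgebra eG (1 + Ideal.Quotient.mk _ (X i)) =
      MonoidAlgebra.of (ZMod p) G (stdGen eG i) := by
  rw [map_add, map_one, truncToGroupAlgebra_mk, mvPolyToGroupAlgebra_X, add_sub_cancel]

noncomputable def groupToTrunc : G →* TruncMvPoly p k n :=
  ∏ i, (AddChar.zmodChar _ (one_add_X_pow_eq_one p n i)).toMonoidHom.comp
    ((Pi.evalMonoidHom _ i).comp eG.toMonoidHom)

theorem groupToTrunc_apply (g : G) : groupToTrunc eG g =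
    ∏ i, (1 + Ideal.Quotient.mk (truncIdeal p k n) (X i)) ^
      (Multiplicative.toAdd (eG g i)).val := by
  simp [groupToTrunc, AddChar.zmodChar_apply]

theorem groupToTrunc_stdGen (i : Fin k) :
    groupToTrunc eG (stdGen eG i) = 1 + Ideal.Quotient.mk (truncIdeal p k n) (X i) := by
  rw [groupToTrunc, MonoidHom.finsetProd_apply, Finset.prod_eq_single i]
  · simpa [stdGen] using AddChar.zmodChar_apply' (one_add_X_pow_eq_one p n i) 1
  · intro j _ hj
    simp [stdGen, Pi.mulSingle_eq_of_ne hj]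
  · simp

noncomputable def truncEquivGroupAlgebra :
    TruncMvPoly p k n ≃ₐ[ZMod p] MonoidAlgebra (ZMod p) G :=
  AlgEquiv.ofAlgHom (truncToGroupAlgebra eG) (MonoidAlgebra.lift _ _ _ (groupToTrunc eG))
    (by
      refine MonoidAlgebra.algHom_ext (fun g => ?_) (by ext)
      rw [AlgHom.comp_apply, AlgHom.id_apply, ← MonoidAlgebra.of_apply, MonoidAlgebra.lift_of,
        groupToTrunc_apply]
      conv_rhs => rw [← prod_stdGen_pow eG g]
      simp only [map_prod, map_pow, truncToGroupAlgebra_one_add_X])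
    (by
      refine Ideal.Quotient.algHom_ext _ (algHom_ext fun i => ?_)
      simp [truncToGroupAlgebra_mk, mvPolyToGroupAlgebra_X, groupToTrunc_stdGen])

theorem comap_truncEquivGroupAlgebra_augIdeal :
    Ideal.comap (truncEquivGroupAlgebra eG) (augIdeal p G) =
      (idealOfVars (Fin k) (ZMod p)).map (Ideal.Quotient.mk (truncIdeal p k n)) := by
  rw [← Ideal.map_comap_of_surjective _ Ideal.Quotient.mk_surjective (Ideal.comap _ _)]
  congr 1
  ext φ
  rw [Ideal.mem_comap, Ideal.mem_comap, augIdeal, RingHom.mem_ker,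
    mem_idealOfVars_iff_constantCoeff_eq_zero]
  exact iff_of_eq (congrArg (· = 0) (augmentation_mvPolyToGroupAlgebra eG φ))

theorem comap_truncEquivGroupAlgebra_augPow (d : ℕ) :
    (augPow p G d).comap (truncEquivGroupAlgebra eG).toLinearMap =
      Submodule.restrictScalars (ZMod p)
        ((idealOfVars (Fin k) (ZMod p)).map (Ideal.Quotient.mk (truncIdeal p k n)) ^ d) := by
  let e : TruncMvPoly p k n ≃+* MonoidAlgebra (ZMod p) G := truncEquivGroupAlgebra eG
  have hpow : Ideal.comap e (augIdeal p G ^ d) = Ideal.comap e (augIdeal p G) ^ d := by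
    rw [← Ideal.map_symm, ← Ideal.map_symm, Ideal.map_pow]
  rw [← comap_truncEquivGroupAlgebra_augIdeal eG, ← Ideal.comap_coe]
  exact congrArg (Submodule.restrictScalars (ZMod p)) hpow

end TruncEquiv

theorem mk_eq_grMk_iff {p : ℕ} {G : Type*} [CommGroup G] {d : ℕ} (a : augPow p G d)
    {u : MonoidAlgebra (ZMod p) G} (hu : u ∈ augPow p G d) :
    (Submodule.Quotient.mk a : grPiece p G d) = grMk p G d u hu ↔
      (a : MonoidAlgebra (ZMod p) G) - u ∈ augIdeal p G ^ (d + 1) :=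
  Submodule.Quotient.eq _

theorem associatedGraded_groupAlgebra_abelian_general (p k : ℕ) (n : Fin k → ℕ) (hp : p.Prime)
    (G : Type) [CommGroup G]
    (eG : G ≃* ((i : Fin k) → Multiplicative (ZMod (p ^ n i)))) :
    ∃ φ : (d : ℕ) → truncPiece p k n d →ₗ[ZMod p] grPiece p G d,
      (∀ d, Function.Bijective (φ d)) ∧
      -- unital
      (∀ (h1 : (1 : TruncMvPoly p k n) ∈ truncPiece p k n 0)
         (h1' : (1 : MonoidAlgebra (ZMod p) G) ∈ augPow p G 0),
        φ 0 ⟨1, h1⟩ = grMk p G 0 1 h1') ∧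
      -- compatible with multiplication of representatives
      (∀ (d e : ℕ) (x : truncPiece p k n d) (y : truncPiece p k n e)
         (hxy : (x : TruncMvPoly p k n) * (y : TruncMvPoly p k n) ∈ truncPiece p k n (d + e))
         (u v : MonoidAlgebra (ZMod p) G)
         (hu : u ∈ augPow p G d) (hv : v ∈ augPow p G e)
         (huv : u * v ∈ augPow p G (d + e)),
        φ d x = grMk p G d u hu → φ e y = grMk p G e v hv →
        φ (d + e) ⟨(x : TruncMvPoly p k n) * (y : TruncMvPoly p k n), hxy⟩ =
          grMk p G (d + e) (u * v) huv) := by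
  have := Fact.mk hp
  set Ψ := truncEquivGroupAlgebra (n := n) eG
  have hcomap := comap_truncEquivGroupAlgebra_augPow (n := n) eG
  have hPA (d : ℕ) : truncPiece p k n d ≤ (augPow p G d).comap Ψ.toLinearMap := by
    rw [hcomap, truncPiece_eq_map_homogeneousSubmodule]
    exact map_homogeneousSubmodule_le_pow_map_idealOfVars _ d
  refine ⟨fun d => (Submodule.comap _ (augPow p G (d + 1))).mkQ ∘ₗ
    Ψ.toLinearMap.restrict (hPA d), fun d => ?_,
    fun _ _ => (mk_eq_grMk_iff _ _).mpr (by simp), ?_⟩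
  · refine Submodule.bijective_mkQ_comp_restrict Ψ.surjective _ ?_ ?_
    · rw [hcomap, truncPiece_eq_map_homogeneousSubmodule]
      exact disjoint_map_homogeneousSubmodule_pow_succ_map_idealOfVars d isHomogeneous_truncIdeal
    · rw [hcomap, hcomap, truncPiece_eq_map_homogeneousSubmodule]
      exact pow_map_idealOfVars_le_map_homogeneousSubmodule_sup _ d
  · intro d e x y _ u v hu hv _ hx hy
    refine (mk_eq_grMk_iff _ _).mpr ?_
    simpa using Ideal.mul_sub_mul_mem_pow_add_succ (hPA d x.2) hv
      ((mk_eq_grMk_iff _ hu).mp hx) ((mk_eq_grMk_iff _ hv).mp hy)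

theorem associatedGraded_groupAlgebra_abelian (p k : ℕ) (n : Fin k → ℕ) (hp : p.Prime)
    (hn : ∀ i, 1 ≤ n i) (G : Type) [CommGroup G]
    (eG : G ≃* ((i : Fin k) → Multiplicative (ZMod (p ^ n i)))) :
    ∃ φ : (d : ℕ) → truncPiece p k n d →ₗ[ZMod p] grPiece p G d,
      (∀ d, Function.Bijective (φ d)) ∧
      -- unital
      (∀ (h1 : (1 : TruncMvPoly p k n) ∈ truncPiece p k n 0)
         (h1' : (1 : MonoidAlgebra (ZMod p) G) ∈ augPow p G 0),
        φ 0 ⟨1, h1⟩ = grMk p G 0 1 h1') ∧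
      -- compatible with multiplication of representatives
      (∀ (d e : ℕ) (x : truncPiece p k n d) (y : truncPiece p k n e)
         (hxy : (x : TruncMvPoly p k n) * (y : TruncMvPoly p k n) ∈ truncPiece p k n (d + e))
         (u v : MonoidAlgebra (ZMod p) G)
         (hu : u ∈ augPow p G d) (hv : v ∈ augPow p G e)
         (huv : u * v ∈ augPow p G (d + e)),
        φ d x = grMk p G d u hu → φ e y = grMk p G e v hv →
        φ (d + e) ⟨(x : TruncMvPoly p k n) * (y : TruncMvPoly p k n), hxy⟩ =
          grMk p G (d + e) (u * v) huv) :=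
  associatedGraded_groupAlgebra_abelian_general p k n hp G eG
end

section
/- Let {G_n} be an N-sequence of a group G. The associated graded abelian group gr G = ⊕_n G_n/G_{n+1} carries a well-defined Lie algebra structure over ℤ with bracket [ρ_r(x), ρ_s(y)] = ρ_{r+s}((x,y)), where ρ_i: G_i → G_i/G_{i+1} is the projection and (x,y) = x⁻¹y⁻¹xy. -/
/-- In a quotient by a normal subgroup containing the commutator, the images commute. -/
private lemma key_aux {G : Type*} [Group G] (N : Subgroup G) [N.Normal] {u v : G}
    (h : u⁻¹ * v⁻¹ * u * v ∈ N) :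
    (u : G ⧸ N) * (v : G ⧸ N) = (v : G ⧸ N) * (u : G ⧸ N) := by
  have h1 : ((u⁻¹ * v⁻¹ * u * v : G) : G ⧸ N) = 1 := (QuotientGroup.eq_one_iff _).2 h
  simp only [QuotientGroup.mk_mul, QuotientGroup.mk_inv] at h1
  calc (u : G ⧸ N) * v
      = ((v : G ⧸ N) * u) * ((u : G ⧸ N)⁻¹ * (v : G ⧸ N)⁻¹ * u * v) := by group
    _ = (v : G ⧸ N) * u := by rw [h1, mul_one]

private lemma inv_central {Q : Type*} [Group Q] {c : Q} (hc : ∀ g : Q, c * g = g * c)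
    (g : Q) : c⁻¹ * g = g * c⁻¹ := by
  calc c⁻¹ * g = c⁻¹ * (g * c) * c⁻¹ := by group
    _ = c⁻¹ * (c * g) * c⁻¹ := by rw [← hc g]
    _ = g * c⁻¹ := by group

/-- well-definedness, pure group computation in the quotient -/
private lemma aux_wd {Q : Type*} [Group Q] (A B α β : Q)
    (hαB : α * B = B * α) (hβA : β * A = A * β) (hβα : β * α = α * β)
    (hc : ∀ g : Q, (A⁻¹ * B⁻¹ * A * B) * g = g * (A⁻¹ * B⁻¹ * A * B)) :
    (A * α)⁻¹ * (B * β)⁻¹ * (A * α) * (B * β) = A⁻¹ * B⁻¹ * A * B := by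
  have hβA' : A⁻¹ * β⁻¹ = β⁻¹ * A⁻¹ := by
    rw [← mul_inv_rev, ← mul_inv_rev, hβA]
  have hβα' : β⁻¹ * α = α * β⁻¹ := by
    calc β⁻¹ * α = β⁻¹ * (α * β) * β⁻¹ := by group
      _ = β⁻¹ * (β * α) * β⁻¹ := by rw [← hβα]
      _ = α * β⁻¹ := by group
  calc (A * α)⁻¹ * (B * β)⁻¹ * (A * α) * (B * β)
      = α⁻¹ * (A⁻¹ * β⁻¹) * (B⁻¹ * A) * (α * B) * β := by group
    _ = α⁻¹ * (β⁻¹ * A⁻¹) * (B⁻¹ * A) * (B * α) * β := by rw [hβA', hαB]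
    _ = (α⁻¹ * β⁻¹) * ((A⁻¹ * B⁻¹ * A * B) * (α * β)) := by group
    _ = (α⁻¹ * β⁻¹) * ((α * β) * (A⁻¹ * B⁻¹ * A * B)) := by rw [hc (α * β)]
    _ = α⁻¹ * (β⁻¹ * α) * β * (A⁻¹ * B⁻¹ * A * B) := by group
    _ = α⁻¹ * (α * β⁻¹) * β * (A⁻¹ * B⁻¹ * A * B) := by rw [hβα']
    _ = A⁻¹ * B⁻¹ * A * B := by group

/-- biadditivity, pure group computation in the quotient -/
private lemma aux_add {Q : Type*} [Group Q] (A A' B : Q)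
    (hc : ∀ g : Q, (A⁻¹ * B⁻¹ * A * B) * g = g * (A⁻¹ * B⁻¹ * A * B)) :
    (A * A')⁻¹ * B⁻¹ * (A * A') * B = (A⁻¹ * B⁻¹ * A * B) * (A'⁻¹ * B⁻¹ * A' * B) := by
  calc (A * A')⁻¹ * B⁻¹ * (A * A') * B
      = A'⁻¹ * (A⁻¹ * B⁻¹ * A * B) * (B⁻¹ * A' * B) := by group
    _ = (A⁻¹ * B⁻¹ * A * B) * A'⁻¹ * (B⁻¹ * A' * B) := by rw [← hc A'⁻¹]
    _ = (A⁻¹ * B⁻¹ * A * B) * (A'⁻¹ * B⁻¹ * A' * B) := by group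

/-- one Hall–Witt term, pure group computation in the quotient -/
private lemma aux_term {Q : Type*} [Group Q] (x y z u d p : Q)
    (hu : u = x⁻¹ * y⁻¹ * x * y) (hd : d = u * y * u⁻¹ * y⁻¹)
    (hp : p = u⁻¹ * z⁻¹ * u * z)
    (hdz : d * z = z * d) (hpc : ∀ g : Q, p * g = g * p) :
    y⁻¹ * ((x⁻¹ * y * x * y⁻¹)⁻¹ * z⁻¹ * (x⁻¹ * y * x * y⁻¹) * z) * y = p⁻¹ := by
  have hpc' := inv_central hpc
  calc y⁻¹ * ((x⁻¹ * y * x * y⁻¹)⁻¹ * z⁻¹ * (x⁻¹ * y * x * y⁻¹) * z) * y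
      = y⁻¹ * (d⁻¹ * (u * (p⁻¹ * u⁻¹)) * (d * (d⁻¹ * z⁻¹ * (d * z)))) * y := by
        simp only [hu, hd, hp]; group
    _ = y⁻¹ * (d⁻¹ * (u * (u⁻¹ * p⁻¹)) * (d * (d⁻¹ * z⁻¹ * (z * d)))) * y := by
        rw [hpc' u⁻¹, hdz]
    _ = y⁻¹ * d⁻¹ * (p⁻¹ * d) * y := by group
    _ = y⁻¹ * d⁻¹ * (d * p⁻¹) * y := by rw [hpc' d]
    _ = y⁻¹ * (p⁻¹ * y) := by group
    _ = y⁻¹ * (y * p⁻¹) := by rw [hpc' y]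
    _ = p⁻¹ := by group

private lemma aux_assemble {Q : Type*} [Group Q] (p q m : Q)
    (hp : ∀ g : Q, p * g = g * p)
    (h : p⁻¹ * q⁻¹ * m⁻¹ = 1) : p * q * m = 1 := by
  have hp' := inv_central hp
  have hm : m = p⁻¹ * q⁻¹ := by
    have h2 : (p⁻¹ * q⁻¹) * m⁻¹ = 1 := by rw [← h]
    have h3 : (p⁻¹ * q⁻¹)⁻¹ = m⁻¹ := inv_eq_of_mul_eq_one_right h2
    exact (inv_injective h3).symm
  rw [hm]
  calc p * q * (p⁻¹ * q⁻¹) = p * (q * p⁻¹) * q⁻¹ := by group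
    _ = p * (p⁻¹ * q) * q⁻¹ := by rw [← hp' q]
    _ = 1 := by group

/-- For an N-sequence `{G_n}` of a group `G`, the bracket
`[ρ_r(x), ρ_s(y)] = ρ_{r+s}((x,y))` on `gr G = ⊕ G_n/G_{n+1}` is a well-defined
Lie ring structure: it is independent of coset representatives, biadditive,
alternating, and satisfies the Jacobi identity (all stated modulo the next
filtration step).  Here `(x,y) = x⁻¹y⁻¹xy`. -/
theorem nSequence_graded_lie_structure {G : Type*} [Group G] (Gs : ℕ → Subgroup G)
    (hone : Gs 1 = ⊤)
    (hdec : ∀ i, 1 ≤ i → Gs (i + 1) ≤ Gs i)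
    (hnormal : ∀ i, 1 ≤ i → (Gs i).Normal)
    (hcomm : ∀ i j, 1 ≤ i → 1 ≤ j → ∀ x y : G, x ∈ Gs i → y ∈ Gs j →
      x⁻¹ * y⁻¹ * x * y ∈ Gs (i + j)) :
    -- well-definedness: the bracket is independent of the choice of representatives
    (∀ r s, 1 ≤ r → 1 ≤ s → ∀ x x' y y' : G, x ∈ Gs r → x' ∈ Gs r → y ∈ Gs s → y' ∈ Gs s →
      x⁻¹ * x' ∈ Gs (r + 1) → y⁻¹ * y' ∈ Gs (s + 1) →
      (x⁻¹ * y⁻¹ * x * y)⁻¹ * (x'⁻¹ * y'⁻¹ * x' * y') ∈ Gs (r + s + 1)) ∧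
    -- biadditivity in the first variable (additivity in the second follows by symmetry)
    (∀ r s, 1 ≤ r → 1 ≤ s → ∀ x x' y : G, x ∈ Gs r → x' ∈ Gs r → y ∈ Gs s →
      ((x * x')⁻¹ * y⁻¹ * (x * x') * y)⁻¹ *
        ((x⁻¹ * y⁻¹ * x * y) * (x'⁻¹ * y⁻¹ * x' * y)) ∈ Gs (r + s + 1)) ∧
    -- alternating: [x̄, ȳ] + [ȳ, x̄] = 0 in gr G
    (∀ r s, 1 ≤ r → 1 ≤ s → ∀ x y : G, x ∈ Gs r → y ∈ Gs s →
      (x⁻¹ * y⁻¹ * x * y) * (y⁻¹ * x⁻¹ * y * x) ∈ Gs (r + s + 1)) ∧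
    -- Jacobi identity
    (∀ r s t, 1 ≤ r → 1 ≤ s → 1 ≤ t → ∀ x y z : G, x ∈ Gs r → y ∈ Gs s → z ∈ Gs t →
      ((x⁻¹ * y⁻¹ * x * y)⁻¹ * z⁻¹ * (x⁻¹ * y⁻¹ * x * y) * z) *
      ((y⁻¹ * z⁻¹ * y * z)⁻¹ * x⁻¹ * (y⁻¹ * z⁻¹ * y * z) * x) *
      ((z⁻¹ * x⁻¹ * z * x)⁻¹ * y⁻¹ * (z⁻¹ * x⁻¹ * z * x) * y) ∈ Gs (r + s + t + 1)) := by
  have hle : ∀ i j : ℕ, 1 ≤ j → j ≤ i → Gs i ≤ Gs j := by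
    intro i j hj hji
    induction hji with
    | refl => exact le_rfl
    | step h ih => exact le_trans (hdec _ (le_trans hj h)) ih
  have hmem_top : ∀ g : G, g ∈ Gs 1 := by intro g; rw [hone]; trivial
  refine ⟨?_, ?_, ?_, ?_⟩
  · -- well-definedness
    intro r s hr hs x x' y y' hx hx' hy hy' ha hb
    haveI : (Gs (r + s + 1)).Normal := hnormal _ (by omega)
    set N := Gs (r + s + 1) with hNdef
    have hαB : ((x⁻¹ * x' : G) : G ⧸ N) * (y : G ⧸ N) = (y : G ⧸ N) * ((x⁻¹ * x' : G) : G ⧸ N) := by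
      refine key_aux N ?_
      have h := hcomm (r + 1) s (by omega) hs _ _ ha hy
      rwa [show r + 1 + s = r + s + 1 from by omega] at h
    have hβA : ((y⁻¹ * y' : G) : G ⧸ N) * (x : G ⧸ N) = (x : G ⧸ N) * ((y⁻¹ * y' : G) : G ⧸ N) := by
      refine key_aux N ?_
      have h := hcomm (s + 1) r (by omega) hr _ _ hb hx
      rwa [show s + 1 + r = r + s + 1 from by omega] at h
    have hβα : ((y⁻¹ * y' : G) : G ⧸ N) * ((x⁻¹ * x' : G) : G ⧸ N)
        = ((x⁻¹ * x' : G) : G ⧸ N) * ((y⁻¹ * y' : G) : G ⧸ N) := by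
      refine key_aux N ?_
      have h := hcomm (s + 1) (r + 1) (by omega) (by omega) _ _ hb ha
      exact hle _ _ (by omega) (by omega) h
    simp only [QuotientGroup.mk_mul, QuotientGroup.mk_inv] at hαB hβA hβα
    have hc : ∀ g : G ⧸ N, ((x : G ⧸ N)⁻¹ * (y : G ⧸ N)⁻¹ * (x : G ⧸ N) * (y : G ⧸ N)) * g
        = g * ((x : G ⧸ N)⁻¹ * (y : G ⧸ N)⁻¹ * (x : G ⧸ N) * (y : G ⧸ N)) := by
      intro g
      obtain ⟨g, rfl⟩ := QuotientGroup.mk_surjective g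
      have h := key_aux N (u := x⁻¹ * y⁻¹ * x * y) (v := g) ?_
      · simpa only [QuotientGroup.mk_mul, QuotientGroup.mk_inv] using h
      · have h2 := hcomm (r + s) 1 (by omega) le_rfl _ g (hcomm r s hr hs x y hx hy) (hmem_top g)
        exact h2
    have main := aux_wd (x : G ⧸ N) (y : G ⧸ N) ((x : G ⧸ N)⁻¹ * (x' : G ⧸ N))
      ((y : G ⧸ N)⁻¹ * (y' : G ⧸ N)) hαB hβA hβα hc
    refine (QuotientGroup.eq_one_iff _).mp ?_
    have final : ((x : G ⧸ N)⁻¹ * (y : G ⧸ N)⁻¹ * (x : G ⧸ N) * (y : G ⧸ N))⁻¹ *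
        (((x : G ⧸ N) * ((x : G ⧸ N)⁻¹ * (x' : G ⧸ N)))⁻¹ *
          ((y : G ⧸ N) * ((y : G ⧸ N)⁻¹ * (y' : G ⧸ N)))⁻¹ *
          ((x : G ⧸ N) * ((x : G ⧸ N)⁻¹ * (x' : G ⧸ N))) *
          ((y : G ⧸ N) * ((y : G ⧸ N)⁻¹ * (y' : G ⧸ N)))) = 1 := by
      rw [main]; group
    refine Eq.trans ?_ final
    simp only [QuotientGroup.mk_mul, QuotientGroup.mk_inv]
    group
  · -- biadditivity
    intro r s hr hs x x' y hx hx' hy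
    haveI : (Gs (r + s + 1)).Normal := hnormal _ (by omega)
    set N := Gs (r + s + 1) with hNdef
    have hc : ∀ g : G ⧸ N, ((x : G ⧸ N)⁻¹ * (y : G ⧸ N)⁻¹ * (x : G ⧸ N) * (y : G ⧸ N)) * g
        = g * ((x : G ⧸ N)⁻¹ * (y : G ⧸ N)⁻¹ * (x : G ⧸ N) * (y : G ⧸ N)) := by
      intro g
      obtain ⟨g, rfl⟩ := QuotientGroup.mk_surjective g
      have h := key_aux N (u := x⁻¹ * y⁻¹ * x * y) (v := g)
        (hcomm (r + s) 1 (by omega) le_rfl _ g (hcomm r s hr hs x y hx hy) (hmem_top g))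
      simpa only [QuotientGroup.mk_mul, QuotientGroup.mk_inv] using h
    have main := aux_add (x : G ⧸ N) (x' : G ⧸ N) (y : G ⧸ N) hc
    refine (QuotientGroup.eq_one_iff _).mp ?_
    have final : (((x : G ⧸ N) * (x' : G ⧸ N))⁻¹ * (y : G ⧸ N)⁻¹ * ((x : G ⧸ N) * (x' : G ⧸ N)) * (y : G ⧸ N))⁻¹ *
        (((x : G ⧸ N)⁻¹ * (y : G ⧸ N)⁻¹ * (x : G ⧸ N) * (y : G ⧸ N)) *
          ((x' : G ⧸ N)⁻¹ * (y : G ⧸ N)⁻¹ * (x' : G ⧸ N) * (y : G ⧸ N))) = 1 := by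
      rw [main]; group
    refine Eq.trans ?_ final
    simp only [QuotientGroup.mk_mul, QuotientGroup.mk_inv]
  · -- alternating
    intro r s hr hs x y hx hy
    have h : (x⁻¹ * y⁻¹ * x * y) * (y⁻¹ * x⁻¹ * y * x) = 1 := by group
    rw [h]; exact one_mem _
  · -- Jacobi
    intro r s t hr hs ht x y z hx hy hz
    haveI : (Gs (r + s + t + 1)).Normal := hnormal _ (by omega)
    set N := Gs (r + s + t + 1) with hNdef
    set a := (x : G ⧸ N) with hadef
    set b := (y : G ⧸ N) with hbdef
    set c := (z : G ⧸ N) with hcdef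
    -- commutator memberships in G
    have hu : x⁻¹ * y⁻¹ * x * y ∈ Gs (r + s) := hcomm r s hr hs x y hx hy
    have hv : y⁻¹ * z⁻¹ * y * z ∈ Gs (s + t) := hcomm s t hs ht y z hy hz
    have hw : z⁻¹ * x⁻¹ * z * x ∈ Gs (t + r) := hcomm t r ht hr z x hz hx
    -- the three double commutators are central in the quotient
    have cen : ∀ (k : ℕ) (w : G), 1 ≤ k → r + s + t ≤ k → w ∈ Gs k →
        ∀ g : G ⧸ N, (w : G ⧸ N) * g = g * (w : G ⧸ N) := by
      intro k w hk hk2 hwk g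
      obtain ⟨g, rfl⟩ := QuotientGroup.mk_surjective g
      refine key_aux N ?_
      have h := hcomm k 1 hk le_rfl w g hwk (hmem_top g)
      exact hle _ _ (by omega) (by omega) h
    have hpc : ∀ g : G ⧸ N,
        (((x⁻¹ * y⁻¹ * x * y)⁻¹ * z⁻¹ * (x⁻¹ * y⁻¹ * x * y) * z : G) : G ⧸ N) * g
        = g * (((x⁻¹ * y⁻¹ * x * y)⁻¹ * z⁻¹ * (x⁻¹ * y⁻¹ * x * y) * z : G) : G ⧸ N) := by
      refine cen (r + s + t) _ (by omega) le_rfl ?_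
      have h := hcomm (r + s) t (by omega) ht _ z hu hz
      exact h
    have hqc : ∀ g : G ⧸ N,
        (((y⁻¹ * z⁻¹ * y * z)⁻¹ * x⁻¹ * (y⁻¹ * z⁻¹ * y * z) * x : G) : G ⧸ N) * g
        = g * (((y⁻¹ * z⁻¹ * y * z)⁻¹ * x⁻¹ * (y⁻¹ * z⁻¹ * y * z) * x : G) : G ⧸ N) := by
      refine cen (s + t + r) _ (by omega) (by omega) ?_
      exact hcomm (s + t) r (by omega) hr _ x hv hx
    have hmc : ∀ g : G ⧸ N,
        (((z⁻¹ * x⁻¹ * z * x)⁻¹ * y⁻¹ * (z⁻¹ * x⁻¹ * z * x) * y : G) : G ⧸ N) * g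
        = g * (((z⁻¹ * x⁻¹ * z * x)⁻¹ * y⁻¹ * (z⁻¹ * x⁻¹ * z * x) * y : G) : G ⧸ N) := by
      refine cen (t + r + s) _ (by omega) (by omega) ?_
      exact hcomm (t + r) s (by omega) hs _ y hw hy
    -- the d-elements commute with the third letter
    have hd1 : (((x⁻¹ * y⁻¹ * x * y) * y * (x⁻¹ * y⁻¹ * x * y)⁻¹ * y⁻¹ : G) : G ⧸ N) * c
        = c * (((x⁻¹ * y⁻¹ * x * y) * y * (x⁻¹ * y⁻¹ * x * y)⁻¹ * y⁻¹ : G) : G ⧸ N) := by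
      refine key_aux N ?_
      have hd : (x⁻¹ * y⁻¹ * x * y) * y * (x⁻¹ * y⁻¹ * x * y)⁻¹ * y⁻¹ ∈ Gs (r + s + 1) := by
        have h := hcomm (r + s) 1 (by omega) le_rfl ((x⁻¹ * y⁻¹ * x * y)⁻¹) (y⁻¹)
          (inv_mem hu) (hmem_top _)
        simpa only [inv_inv] using h
      have h := hcomm (r + s + 1) t (by omega) ht _ z hd hz
      rwa [show r + s + 1 + t = r + s + t + 1 from by omega] at h
    have hd2 : (((y⁻¹ * z⁻¹ * y * z) * z * (y⁻¹ * z⁻¹ * y * z)⁻¹ * z⁻¹ : G) : G ⧸ N) * a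
        = a * (((y⁻¹ * z⁻¹ * y * z) * z * (y⁻¹ * z⁻¹ * y * z)⁻¹ * z⁻¹ : G) : G ⧸ N) := by
      refine key_aux N ?_
      have hd : (y⁻¹ * z⁻¹ * y * z) * z * (y⁻¹ * z⁻¹ * y * z)⁻¹ * z⁻¹ ∈ Gs (s + t + 1) := by
        have h := hcomm (s + t) 1 (by omega) le_rfl ((y⁻¹ * z⁻¹ * y * z)⁻¹) (z⁻¹)
          (inv_mem hv) (hmem_top _)
        simpa only [inv_inv] using h
      have h := hcomm (s + t + 1) r (by omega) hr _ x hd hx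
      rwa [show s + t + 1 + r = r + s + t + 1 from by omega] at h
    have hd3 : (((z⁻¹ * x⁻¹ * z * x) * x * (z⁻¹ * x⁻¹ * z * x)⁻¹ * x⁻¹ : G) : G ⧸ N) * b
        = b * (((z⁻¹ * x⁻¹ * z * x) * x * (z⁻¹ * x⁻¹ * z * x)⁻¹ * x⁻¹ : G) : G ⧸ N) := by
      refine key_aux N ?_
      have hd : (z⁻¹ * x⁻¹ * z * x) * x * (z⁻¹ * x⁻¹ * z * x)⁻¹ * x⁻¹ ∈ Gs (t + r + 1) := by
        have h := hcomm (t + r) 1 (by omega) le_rfl ((z⁻¹ * x⁻¹ * z * x)⁻¹) (x⁻¹)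
          (inv_mem hw) (hmem_top _)
        simpa only [inv_inv] using h
      have h := hcomm (t + r + 1) s (by omega) hs _ y hd hy
      rwa [show t + r + 1 + s = r + s + t + 1 from by omega] at h
    -- push coercions inward
    simp only [QuotientGroup.mk_mul, QuotientGroup.mk_inv, ← hadef, ← hbdef, ← hcdef]
      at hpc hqc hmc hd1 hd2 hd3
    have t1 := aux_term a b c (a⁻¹ * b⁻¹ * a * b)
      ((a⁻¹ * b⁻¹ * a * b) * b * (a⁻¹ * b⁻¹ * a * b)⁻¹ * b⁻¹)
      ((a⁻¹ * b⁻¹ * a * b)⁻¹ * c⁻¹ * (a⁻¹ * b⁻¹ * a * b) * c) rfl rfl rfl hd1 hpc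
    have t2 := aux_term b c a (b⁻¹ * c⁻¹ * b * c)
      ((b⁻¹ * c⁻¹ * b * c) * c * (b⁻¹ * c⁻¹ * b * c)⁻¹ * c⁻¹)
      ((b⁻¹ * c⁻¹ * b * c)⁻¹ * a⁻¹ * (b⁻¹ * c⁻¹ * b * c) * a) rfl rfl rfl hd2 hqc
    have t3 := aux_term c a b (c⁻¹ * a⁻¹ * c * a)
      ((c⁻¹ * a⁻¹ * c * a) * a * (c⁻¹ * a⁻¹ * c * a)⁻¹ * a⁻¹)
      ((c⁻¹ * a⁻¹ * c * a)⁻¹ * b⁻¹ * (c⁻¹ * a⁻¹ * c * a) * b) rfl rfl rfl hd3 hmc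
    -- Hall–Witt identity
    have hw1 : (b⁻¹ * ((a⁻¹ * b * a * b⁻¹)⁻¹ * c⁻¹ * (a⁻¹ * b * a * b⁻¹) * c) * b) *
        (c⁻¹ * ((b⁻¹ * c * b * c⁻¹)⁻¹ * a⁻¹ * (b⁻¹ * c * b * c⁻¹) * a) * c) *
        (a⁻¹ * ((c⁻¹ * a * c * a⁻¹)⁻¹ * b⁻¹ * (c⁻¹ * a * c * a⁻¹) * b) * a) = 1 := by
      group
    rw [t1, t2, t3] at hw1
    have final := aux_assemble _ _ _ hpc hw1
    refine (QuotientGroup.eq_one_iff _).mp ?_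
    simp only [QuotientGroup.mk_mul, QuotientGroup.mk_inv, ← hadef, ← hbdef, ← hcdef]
    exact final
end

section
/- Let p be an odd prime and A = T(a,b,c)/J the 𝔽_p-algebra with generators a,b,c and relations ab − ba = c, ac = ca, bc = cb, a^p = b^p = c^p = 0. Then {c^i b^j a^k : 0 ≤ i,j,k ≤ p−1} is a basis of A over 𝔽_p; in particular dim A = p³. -/
/-! STATEMENT 15: for `p` an odd prime, the `𝔽_p`-algebra `A = T(a,b,c)/J` with
relations `ab - ba = c`, `ac = ca`, `bc = cb`, `a^p = b^p = c^p = 0` has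
`{c^i b^j a^k : 0 ≤ i,j,k ≤ p-1}` as a basis; in particular `dim A = p³`. -/

/-- the free associative `𝔽_p`-algebra on three generators `a, b, c`. -/
abbrev FreeHeis (p : ℕ) := FreeAlgebra (ZMod p) (Fin 3)

/-- the defining relations `ab = ba + c`, `ac = ca`, `bc = cb`, `a^p = b^p = c^p = 0`. -/
def heisRel (p : ℕ) : FreeHeis p → FreeHeis p → Prop := fun u v =>
  letI a := FreeAlgebra.ι (ZMod p) (0 : Fin 3)
  letI b := FreeAlgebra.ι (ZMod p) (1 : Fin 3)
  letI c := FreeAlgebra.ι (ZMod p) (2 : Fin 3)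
  (u = a * b ∧ v = b * a + c) ∨ (u = a * c ∧ v = c * a) ∨ (u = b * c ∧ v = c * b) ∨
  (u = a ^ p ∧ v = 0) ∨ (u = b ^ p ∧ v = 0) ∨ (u = c ^ p ∧ v = 0)

/-- `A = T(a,b,c)/J`. -/
abbrev HeisAlg (p : ℕ) := RingQuot (heisRel p)

/-- the monomials `c^i b^j a^k`, `0 ≤ i, j, k ≤ p-1`, in `A`. -/
noncomputable def heisMonomial (p : ℕ) (t : Fin p × Fin p × Fin p) : HeisAlg p :=
  RingQuot.mkAlgHom (ZMod p) (heisRel p) (FreeAlgebra.ι (ZMod p) (2 : Fin 3)) ^ (t.1 : ℕ) *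
  RingQuot.mkAlgHom (ZMod p) (heisRel p) (FreeAlgebra.ι (ZMod p) (1 : Fin 3)) ^ (t.2.1 : ℕ) *
  RingQuot.mkAlgHom (ZMod p) (heisRel p) (FreeAlgebra.ι (ZMod p) (0 : Fin 3)) ^ (t.2.2 : ℕ)


/-! The monomials span: their span contains `1` and is stable under right multiplication by
`a`, `b`, `c`, because `c^i b^j a^k · b = c^i b^(j+1) a^k + k c^(i+1) b^j a^(k-1)` (from
`a^k b = b a^k + k c a^(k-1)`), and any monomial with an exponent `≥ p` vanishes.

They are independent: `A` acts on `V = 𝔽_p^(p³)` with basis `e i j k` (standing for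
`c^i b^j a^k`, the action being left multiplication rewritten in ordered monomials), by `b`, `c`
raising `j`, `i` and by `a ↦ S + N`, `S e i j k = e i j (k+1)`, `N e i j k = j e (i+1) (j-1) k`.
The relations hold (`a^p = S^p + N^p = 0` as `S`, `N` commute in characteristic `p`), and
`c^i b^j a^k` sends `e 0 0 0` to `e i j k`. -/

section Spanning

variable {R A : Type*} [CommSemiring R] [Semiring A] [Algebra R A]

theorem Submodule.eq_top_of_one_mem_of_mul_mem {s : Set A} (hs : Algebra.adjoin R s = ⊤)
    {S : Submodule R A} (h1 : 1 ∈ S) (hmul : ∀ x ∈ S, ∀ y ∈ s, x * y ∈ S) : S = ⊤ := by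
  refine eq_top_iff'.2 fun x => ?_
  suffices ∀ y ∈ S, y * x ∈ S by simpa using this 1 h1
  induction (hs ▸ Algebra.mem_top : x ∈ Algebra.adjoin R s) using Algebra.adjoin_induction with
  | mem z hz => exact fun y hy => hmul y hy z hz
  | algebraMap r =>
    intro y hy
    rw [← Algebra.commutes, ← Algebra.smul_def]
    exact S.smul_mem r hy
  | add z w _ _ hz hw =>
    intro y hy
    rw [mul_add]
    exact add_mem (hz y hy) (hw y hy)
  | mul z w _ _ hz hw =>
    intro y hy
    rw [← mul_assoc]
    exact hw _ (hz y hy)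

variable {a b c : A}

theorem pow_succ_mul_eq_of_mul_eq_add (hab : a * b = b * a + c) (hac : Commute a c) (n : ℕ) :
    a ^ (n + 1) * b = b * a ^ (n + 1) + (n + 1) • (c * a ^ n) := by
  induction n with
  | zero => simpa using hab
  | succ n ih =>
    calc a ^ (n + 2) * b
        = a * (a ^ (n + 1) * b) := by rw [← mul_assoc, ← pow_succ']
      _ = (a * b) * a ^ (n + 1) + (n + 1) • (a * c * a ^ n) := by
          rw [ih, mul_add, mul_smul_comm, ← mul_assoc, ← mul_assoc]
      _ = b * a ^ (n + 2) + (n + 2) • (c * a ^ (n + 1)) := by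
          rw [hab, add_mul, mul_assoc b, ← pow_succ', hac.eq, mul_assoc c, ← pow_succ', add_assoc,
            ← succ_nsmul']

variable (a b c) in
def orderedMonomial (i j k : ℕ) : A := c ^ i * b ^ j * a ^ k

theorem orderedMonomial_mul_a (i j k : ℕ) :
    orderedMonomial a b c i j k * a = orderedMonomial a b c i j (k + 1) := by
  rw [orderedMonomial, orderedMonomial, mul_assoc, ← pow_succ]

theorem pow_mul_pow_mul_mul_eq (hbc : Commute b c) (i j : ℕ) (x : A) :
    c ^ i * b ^ j * (c * x) = c ^ (i + 1) * b ^ j * x := by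
  rw [← mul_assoc, mul_assoc (c ^ i), (hbc.pow_left j).eq, ← mul_assoc, ← pow_succ]

theorem orderedMonomial_mul_c (hac : Commute a c) (hbc : Commute b c) (i j k : ℕ) :
    orderedMonomial a b c i j k * c = orderedMonomial a b c (i + 1) j k := by
  rw [orderedMonomial, mul_assoc, (hac.pow_left k).eq, pow_mul_pow_mul_mul_eq hbc,
    orderedMonomial]

theorem orderedMonomial_mul_b (hab : a * b = b * a + c) (hac : Commute a c) (hbc : Commute b c)
    (i j k : ℕ) :
    orderedMonomial a b c i j k * b =
      orderedMonomial a b c i (j + 1) k + k • orderedMonomial a b c (i + 1) j (k - 1) := by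
  rcases k with _ | k
  · simp [orderedMonomial, mul_assoc, ← pow_succ]
  · rw [orderedMonomial, mul_assoc, pow_succ_mul_eq_of_mul_eq_add hab hac, mul_add,
      mul_smul_comm, pow_mul_pow_mul_mul_eq hbc, ← mul_assoc, mul_assoc (c ^ i), ← pow_succ]
    rfl

theorem orderedMonomial_eq_zero {n : ℕ} (ha : a ^ n = 0) (hb : b ^ n = 0) (hc : c ^ n = 0)
    {i j k : ℕ} (h : n ≤ i ∨ n ≤ j ∨ n ≤ k) : orderedMonomial a b c i j k = 0 := by
  rcases h with h | h | h
  · rw [orderedMonomial, pow_eq_zero_of_le h hc, zero_mul, zero_mul]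
  · rw [orderedMonomial, pow_eq_zero_of_le h hb, mul_zero, zero_mul]
  · rw [orderedMonomial, pow_eq_zero_of_le h ha, mul_zero]

theorem span_orderedMonomial_eq_top {n : ℕ} (hgen : Algebra.adjoin R {a, b, c} = ⊤)
    (hab : a * b = b * a + c) (hac : Commute a c) (hbc : Commute b c)
    (ha : a ^ n = 0) (hb : b ^ n = 0) (hc : c ^ n = 0) :
    Submodule.span R
      (Set.range fun t : Fin n × Fin n × Fin n => orderedMonomial a b c t.1 t.2.1 t.2.2) = ⊤ := by
  set S := Submodule.span R
    (Set.range fun t : Fin n × Fin n × Fin n => orderedMonomial a b c t.1 t.2.1 t.2.2)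
  have mem (i j k : ℕ) : orderedMonomial a b c i j k ∈ S := by
    by_cases h : i < n ∧ j < n ∧ k < n
    · exact Submodule.subset_span ⟨(⟨i, h.1⟩, ⟨j, h.2.1⟩, ⟨k, h.2.2⟩), rfl⟩
    · rw [orderedMonomial_eq_zero ha hb hc (by omega : n ≤ i ∨ n ≤ j ∨ n ≤ k)]
      exact S.zero_mem
  refine Submodule.eq_top_of_one_mem_of_mul_mem hgen (by simpa [orderedMonomial] using mem 0 0 0)
    fun x hx y hy => ?_
  refine (Submodule.span_le (p := S.comap (LinearMap.mulRight R y)) |>.2 ?_) hx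
  rintro _ ⟨⟨i, j, k⟩, rfl⟩
  change orderedMonomial a b c i j k * y ∈ S
  rcases hy with h | h | h <;> subst y
  · exact orderedMonomial_mul_a (b := b) (c := c) i j k ▸ mem _ _ _
  · rw [orderedMonomial_mul_b hab hac hbc]
    exact add_mem (mem _ _ _) (nsmul_mem (mem _ _ _) _)
  · exact orderedMonomial_mul_c hac hbc i j k ▸ mem _ _ _

end Spanning

namespace HeisAlg

variable {p : ℕ}

variable (p) in
noncomputable def gen (i : Fin 3) : HeisAlg p :=
  RingQuot.mkAlgHom (ZMod p) (heisRel p) (FreeAlgebra.ι (ZMod p) i)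

theorem heisMonomial_eq_orderedMonomial (t : Fin p × Fin p × Fin p) :
    heisMonomial p t = orderedMonomial (gen p 0) (gen p 1) (gen p 2) t.1 t.2.1 t.2.2 :=
  rfl

theorem gen_zero_mul_gen_one : gen p 0 * gen p 1 = gen p 1 * gen p 0 + gen p 2 := by
  simp only [gen, ← map_mul, ← map_add]
  exact RingQuot.mkAlgHom_rel _ (Or.inl ⟨rfl, rfl⟩)

theorem commute_gen_zero_gen_two : Commute (gen p 0) (gen p 2) := by
  simp only [Commute, SemiconjBy, gen, ← map_mul]
  exact RingQuot.mkAlgHom_rel _ (Or.inr (Or.inl ⟨rfl, rfl⟩))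

theorem commute_gen_one_gen_two : Commute (gen p 1) (gen p 2) := by
  simp only [Commute, SemiconjBy, gen, ← map_mul]
  exact RingQuot.mkAlgHom_rel _ (Or.inr (Or.inr (Or.inl ⟨rfl, rfl⟩)))

theorem gen_pow_eq_zero (i : Fin 3) : gen p i ^ p = 0 := by
  rw [gen, ← map_pow, ← map_zero (RingQuot.mkAlgHom (ZMod p) (heisRel p))]
  refine RingQuot.mkAlgHom_rel _ ?_
  fin_cases i
  exacts [.inr (.inr (.inr (.inl ⟨rfl, rfl⟩))), .inr (.inr (.inr (.inr (.inl ⟨rfl, rfl⟩)))),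
    .inr (.inr (.inr (.inr (.inr ⟨rfl, rfl⟩))))]

theorem adjoin_gen_eq_top : Algebra.adjoin (ZMod p) {gen p 0, gen p 1, gen p 2} = ⊤ := by
  have hrange : {gen p 0, gen p 1, gen p 2} =
      RingQuot.mkAlgHom (ZMod p) (heisRel p) '' Set.range (FreeAlgebra.ι (ZMod p)) := by
    rw [← Set.range_comp]
    ext
    simp [Fin.exists_fin_succ, eq_comm, gen]
  rw [hrange, Algebra.adjoin_image, FreeAlgebra.adjoin_range_ι, Algebra.map_top,
    AlgHom.range_eq_top]
  exact RingQuot.mkAlgHom_surjective _ _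

theorem span_heisMonomial_eq_top :
    Submodule.span (ZMod p) (Set.range (heisMonomial p)) = ⊤ :=
  span_orderedMonomial_eq_top adjoin_gen_eq_top gen_zero_mul_gen_one commute_gen_zero_gen_two
    commute_gen_one_gen_two (gen_pow_eq_zero 0) (gen_pow_eq_zero 1) (gen_pow_eq_zero 2)

section Lift

variable {B : Type*} [Semiring B] [Algebra (ZMod p) B] {x y z : B}

noncomputable def lift (hxy : x * y = y * x + z) (hxz : x * z = z * x) (hyz : y * z = z * y)
    (hx : x ^ p = 0) (hy : y ^ p = 0) (hz : z ^ p = 0) : HeisAlg p →ₐ[ZMod p] B :=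
  RingQuot.liftAlgHom (ZMod p) ⟨FreeAlgebra.lift (ZMod p) ![x, y, z], by
    rintro u v (⟨rfl, rfl⟩ | ⟨rfl, rfl⟩ | ⟨rfl, rfl⟩ | ⟨rfl, rfl⟩ | ⟨rfl, rfl⟩ | ⟨rfl, rfl⟩) <;>
      simpa⟩

theorem lift_gen (hxy : x * y = y * x + z) (hxz : x * z = z * x) (hyz : y * z = z * y)
    (hx : x ^ p = 0) (hy : y ^ p = 0) (hz : z ^ p = 0) (i : Fin 3) :
    lift hxy hxz hyz hx hy hz (gen p i) = ![x, y, z] i := by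
  simp [lift, gen]

end Lift

end HeisAlg

namespace HeisRep

variable (p : ℕ)

abbrev V := Fin p × Fin p × Fin p → ZMod p

noncomputable def e (i j k : ℕ) : V p :=
  if h : i < p ∧ j < p ∧ k < p then Pi.single (⟨i, h.1⟩, ⟨j, h.2.1⟩, ⟨k, h.2.2⟩) 1 else 0

theorem e_eq_basisFun (t : Fin p × Fin p × Fin p) :
    e p t.1 t.2.1 t.2.2 = Pi.basisFun (ZMod p) _ t := by
  rw [e, dif_pos ⟨t.1.2, t.2.1.2, t.2.2.2⟩, Pi.basisFun_apply]

theorem e_eq_zero {i j k : ℕ} (h : p ≤ i ∨ p ≤ j ∨ p ≤ k) : e p i j k = 0 :=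
  dif_neg (by omega)

noncomputable def mkEnd (g : ℕ → ℕ → ℕ → V p) : Module.End (ZMod p) (V p) :=
  (Pi.basisFun (ZMod p) _).constr (ZMod p) fun t => g t.1 t.2.1 t.2.2

variable {p} in
theorem mkEnd_e {g : ℕ → ℕ → ℕ → V p}
    (hg : ∀ i j k, p ≤ i ∨ p ≤ j ∨ p ≤ k → g i j k = 0) (i j k : ℕ) :
    mkEnd p g (e p i j k) = g i j k := by
  by_cases h : i < p ∧ j < p ∧ k < p
  · exact e_eq_basisFun p (⟨i, h.1⟩, ⟨j, h.2.1⟩, ⟨k, h.2.2⟩) ▸ Module.Basis.constr_basis ..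
  · rw [e_eq_zero p (by omega), map_zero, hg i j k (by omega)]

noncomputable def opS : Module.End (ZMod p) (V p) := mkEnd p fun i j k => e p i j (k + 1)

noncomputable def opN : Module.End (ZMod p) (V p) :=
  mkEnd p fun i j k => (j : ZMod p) • e p (i + 1) (j - 1) k

noncomputable def opA : Module.End (ZMod p) (V p) := opS p + opN p

noncomputable def opB : Module.End (ZMod p) (V p) := mkEnd p fun i j k => e p i (j + 1) k

noncomputable def opC : Module.End (ZMod p) (V p) := mkEnd p fun i j k => e p (i + 1) j k

theorem opS_e (i j k : ℕ) : opS p (e p i j k) = e p i j (k + 1) :=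
  mkEnd_e (fun _ _ _ h => e_eq_zero p (by omega)) i j k

theorem opN_e (i j k : ℕ) : opN p (e p i j k) = (j : ZMod p) • e p (i + 1) (j - 1) k := by
  refine mkEnd_e (fun i j k h => ?_) i j k
  obtain rfl | hj : j = p ∨ (p ≤ i ∨ p ≤ j - 1 ∨ p ≤ k) := by omega
  · rw [ZMod.natCast_self, zero_smul]
  · rw [e_eq_zero p (by omega), smul_zero]

theorem opA_e (i j k : ℕ) :
    opA p (e p i j k) = e p i j (k + 1) + (j : ZMod p) • e p (i + 1) (j - 1) k := by
  rw [opA, LinearMap.add_apply, opS_e, opN_e]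

theorem opB_e (i j k : ℕ) : opB p (e p i j k) = e p i (j + 1) k :=
  mkEnd_e (fun _ _ _ h => e_eq_zero p (by omega)) i j k

theorem opC_e (i j k : ℕ) : opC p (e p i j k) = e p (i + 1) j k :=
  mkEnd_e (fun _ _ _ h => e_eq_zero p (by omega)) i j k

theorem ext_e {f g : Module.End (ZMod p) (V p)} (h : ∀ i j k, f (e p i j k) = g (e p i j k)) :
    f = g :=
  (Pi.basisFun (ZMod p) _).ext fun t => by rw [← e_eq_basisFun, h]

theorem opA_mul_opB : opA p * opB p = opB p * opA p + opC p := by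
  refine ext_e p fun i j k => ?_
  simp only [Module.End.mul_apply, LinearMap.add_apply, map_add, map_smul, opA_e, opB_e, opC_e]
  rcases j with _ | j
  · simp
  · simp only [Nat.add_sub_cancel]
    module

theorem commute_opA_opC : Commute (opA p) (opC p) :=
  ext_e p fun i j k => by
    simp only [Module.End.mul_apply, map_add, map_smul, opA_e, opC_e]

theorem commute_opB_opC : Commute (opB p) (opC p) :=
  ext_e p fun i j k => by simp only [Module.End.mul_apply, opB_e, opC_e]

theorem commute_opS_opN : Commute (opS p) (opN p) :=
  ext_e p fun i j k => by simp only [Module.End.mul_apply, map_smul, opS_e, opN_e]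

theorem opS_pow_e (n i j k : ℕ) : (opS p ^ n) (e p i j k) = e p i j (k + n) := by
  induction n with
  | zero => rfl
  | succ n ih => rw [pow_succ', Module.End.mul_apply, ih, opS_e, add_assoc]

theorem opB_pow_e (n i j k : ℕ) : (opB p ^ n) (e p i j k) = e p i (j + n) k := by
  induction n with
  | zero => rfl
  | succ n ih => rw [pow_succ', Module.End.mul_apply, ih, opB_e, add_assoc]

theorem opC_pow_e (n i j k : ℕ) : (opC p ^ n) (e p i j k) = e p (i + n) j k := by
  induction n with
  | zero => rfl
  | succ n ih => rw [pow_succ', Module.End.mul_apply, ih, opC_e, add_assoc]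

theorem opN_pow_e (n i j k : ℕ) :
    ∃ r : ZMod p, (opN p ^ n) (e p i j k) = r • e p (i + n) (j - n) k := by
  induction n with
  | zero => exact ⟨1, by simp⟩
  | succ n ih =>
    obtain ⟨r, hr⟩ := ih
    refine ⟨r * ((j - n : ℕ) : ZMod p), ?_⟩
    rw [pow_succ', Module.End.mul_apply, hr, map_smul, opN_e, smul_smul, Nat.sub_sub, add_assoc]

theorem opA_pow_e_zero (n i k : ℕ) : (opA p ^ n) (e p i 0 k) = e p i 0 (k + n) := by
  induction n with
  | zero => rfl
  | succ n ih => rw [pow_succ', Module.End.mul_apply, ih, opA_e, Nat.cast_zero, zero_smul,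
      add_zero, add_assoc]

theorem opS_pow_eq_zero : opS p ^ p = 0 :=
  ext_e p fun i j k => by rw [opS_pow_e, e_eq_zero p (by omega), LinearMap.zero_apply]

theorem opN_pow_eq_zero : opN p ^ p = 0 :=
  ext_e p fun i j k => by
    obtain ⟨r, hr⟩ := opN_pow_e p p i j k
    rw [hr, e_eq_zero p (by omega), smul_zero, LinearMap.zero_apply]

theorem opB_pow_eq_zero : opB p ^ p = 0 :=
  ext_e p fun i j k => by rw [opB_pow_e, e_eq_zero p (by omega), LinearMap.zero_apply]

theorem opC_pow_eq_zero : opC p ^ p = 0 :=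
  ext_e p fun i j k => by rw [opC_pow_e, e_eq_zero p (by omega), LinearMap.zero_apply]

variable {p}

theorem opA_pow_eq_zero [Fact p.Prime] : opA p ^ p = 0 := by
  have : CharP (Module.End (ZMod p) (V p)) p := charP_of_injective_algebraMap' (ZMod p) p
  rw [opA, add_pow_char_of_commute p (commute_opS_opN p), opS_pow_eq_zero,
    opN_pow_eq_zero, add_zero]

noncomputable def rep [Fact p.Prime] : HeisAlg p →ₐ[ZMod p] Module.End (ZMod p) (V p) :=
  HeisAlg.lift (opA_mul_opB p) (commute_opA_opC p) (commute_opB_opC p) opA_pow_eq_zero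
    (opB_pow_eq_zero p) (opC_pow_eq_zero p)

theorem rep_gen [Fact p.Prime] (i : Fin 3) :
    rep (HeisAlg.gen p i) = ![opA p, opB p, opC p] i :=
  HeisAlg.lift_gen ..

theorem rep_heisMonomial_e_zero [Fact p.Prime] (t : Fin p × Fin p × Fin p) :
    rep (heisMonomial p t) (e p 0 0 0) = Pi.basisFun (ZMod p) _ t := by
  simp only [HeisAlg.heisMonomial_eq_orderedMonomial, orderedMonomial, map_mul, map_pow, rep_gen,
    Module.End.mul_apply]
  simpa [opA_pow_e_zero, opB_pow_e, opC_pow_e] using e_eq_basisFun p t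

end HeisRep

theorem HeisAlg.linearIndependent_heisMonomial {p : ℕ} [Fact p.Prime] :
    LinearIndependent (ZMod p) (heisMonomial p) := by
  let evalAtOne := LinearMap.applyₗ (HeisRep.e p 0 0 0) ∘ₗ (HeisRep.rep (p := p)).toLinearMap
  have : evalAtOne ∘ heisMonomial p = Pi.basisFun (ZMod p) _ :=
    funext HeisRep.rep_heisMonomial_e_zero
  exact .of_comp evalAtOne (this ▸ (Pi.basisFun (ZMod p) _).linearIndependent)

theorem heisAlg_monomial_basis_general (p : ℕ) (hp : p.Prime) :
    LinearIndependent (ZMod p) (heisMonomial p) ∧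
    Submodule.span (ZMod p) (Set.range (heisMonomial p)) = ⊤ ∧
    Module.finrank (ZMod p) (HeisAlg p) = p ^ 3 := by
  have : Fact p.Prime := ⟨hp⟩
  have hli := HeisAlg.linearIndependent_heisMonomial (p := p)
  have hspan := HeisAlg.span_heisMonomial_eq_top (p := p)
  refine ⟨hli, hspan, ?_⟩
  rw [Module.finrank_eq_card_basis (Module.Basis.mk hli hspan.ge)]
  simp [pow_three]

theorem heisAlg_monomial_basis (p : ℕ) (hp : p.Prime) (hodd : Odd p) :
    LinearIndependent (ZMod p) (heisMonomial p) ∧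
    Submodule.span (ZMod p) (Set.range (heisMonomial p)) = ⊤ ∧
    Module.finrank (ZMod p) (HeisAlg p) = p ^ 3 :=
  heisAlg_monomial_basis_general p hp
end
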